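/- arXiv:1308.5122 — 7 statements merged into one kernel-verified Lean document; each statement's English description precedes it below -/
import Mathlib

section
/- If m is an odd integer, then there is no surjective group homomorphism from BS(m,m) onto the Klein bottle group K = ⟨u,v | u² = v²⟩. -/
/-- The single defining relation `t a^m t⁻¹ a^{-n}` of the Baumslag-Solitar group
`BS(m,n)`, as a subset of the free group on `Bool` (with `false ↦ a`, `true ↦ t`). -/
abbrev bsRels (m n : ℤ) : Set (FreeGroup Bool) :=
  {FreeGroup.of true * (FreeGroup.of false) ^ m * (FreeGroup.of true)⁻¹ *
    ((FreeGroup.of false) ^ n)⁻¹}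

/-- The Baumslag-Solitar group `BS(m,n) = ⟨a, t ∣ t a^m t⁻¹ = a^n⟩`. -/
abbrev BS (m n : ℤ) := PresentedGroup (bsRels m n)

/-- The generator `a` of `BS(m,n)`. -/
def BS.a (m n : ℤ) : BS m n := PresentedGroup.of false

/-- The generator `t` of `BS(m,n)`. -/
def BS.t (m n : ℤ) : BS m n := PresentedGroup.of true

/-- The Klein bottle group `K = ⟨u, v ∣ u² = v²⟩` (`true ↦ u`, `false ↦ v`). -/
abbrev KB := PresentedGroup
  ({FreeGroup.of true ^ 2 * (FreeGroup.of false ^ 2)⁻¹} : Set (FreeGroup Bool))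

/-- The generator `u` of the Klein bottle group. -/
def KB.u : KB := PresentedGroup.of true

/-- The generator `v` of the Klein bottle group. -/
def KB.v : KB := PresentedGroup.of false

section BS2Aux

open DihedralGroup

private abbrev M2 := Multiplicative (ZMod 2 × ZMod 2)

private def kbGen : Bool → DihedralGroup 4 := fun b => bif b then sr 0 else sr 1

private lemma kb_rels_hold :
    ∀ r ∈ ({FreeGroup.of true ^ 2 * (FreeGroup.of false ^ 2)⁻¹} : Set (FreeGroup Bool)),
      FreeGroup.lift kbGen r = 1 := by
  rintro r hr
  rcases hr with rfl
  simp only [map_mul, map_inv, map_pow, FreeGroup.lift_apply_of, kbGen]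
  decide

private def ρKB : KB →* DihedralGroup 4 := PresentedGroup.toGroup kb_rels_hold

private def hDfun : DihedralGroup 4 → M2
  | .r i => Multiplicative.ofAdd (ZMod.castHom (by norm_num : (2:ℕ) ∣ 4) (ZMod 2) i,
      ZMod.castHom (by norm_num : (2:ℕ) ∣ 4) (ZMod 2) i)
  | .sr i => Multiplicative.ofAdd (ZMod.castHom (by norm_num : (2:ℕ) ∣ 4) (ZMod 2) i + 1,
      ZMod.castHom (by norm_num : (2:ℕ) ∣ 4) (ZMod 2) i)

private def hD : DihedralGroup 4 →* M2 where
  toFun := hDfun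
  map_one' := by decide
  map_mul' := by decide

private def χKB : KB →* M2 := hD.comp ρKB

private lemma rho_u : ρKB KB.u = sr 0 := PresentedGroup.toGroup.of kb_rels_hold
private lemma rho_v : ρKB KB.v = sr 1 := PresentedGroup.toGroup.of kb_rels_hold

private lemma chi_u : χKB KB.u = Multiplicative.ofAdd (1, 0) := by
  show hD (ρKB KB.u) = _
  rw [rho_u]; decide

private lemma chi_v : χKB KB.v = Multiplicative.ofAdd (0, 1) := by
  show hD (ρKB KB.v) = _
  rw [rho_v]; decide

private lemma bs_rel (m : ℤ) : BS.t m m * BS.a m m ^ m = BS.a m m ^ m * BS.t m m := by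
  have h0 : PresentedGroup.mk (bsRels m m)
      (FreeGroup.of true * (FreeGroup.of false) ^ m * (FreeGroup.of true)⁻¹ *
        ((FreeGroup.of false) ^ m)⁻¹) = 1 := by
    apply (QuotientGroup.eq_one_iff _).mpr
    exact Subgroup.subset_normalClosure rfl
  simp only [map_mul, map_inv, map_zpow] at h0
  have h1 : BS.t m m * BS.a m m ^ m * (BS.t m m)⁻¹ * (BS.a m m ^ m)⁻¹ = 1 := h0
  have h2 := mul_inv_eq_one.mp h1
  rw [mul_inv_eq_iff_eq_mul] at h2
  exact h2

private lemma bs_central (m : ℤ) (y : BS m m) :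
    BS.a m m ^ m * y = y * BS.a m m ^ m := by
  have hy : y ∈ Subgroup.centralizer {BS.a m m ^ m} := by
    refine PresentedGroup.generated_by _ _ ?_ y
    intro j
    rw [Subgroup.mem_centralizer_iff]
    intro g hg
    rcases hg with rfl
    cases j with
    | false => exact ((Commute.refl (BS.a m m)).zpow_left m).eq
    | true => exact (bs_rel m).symm
  exact Subgroup.mem_centralizer_iff.mp hy _ rfl

end BS2Aux

theorem stmt2 (m : ℤ) (hm : Odd m) :
    ¬∃ f : BS m m →* KB, Function.Surjective f := by
  rintro ⟨f, hf⟩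
  set c : M2 := χKB (f (BS.t m m)) with hc
  have sq : ∀ x : M2, x * x = 1 := by decide
  -- f (a^m) is central in KB
  have hcen : ∀ y : KB, f (BS.a m m ^ m) * y = y * f (BS.a m m ^ m) := by
    intro y
    obtain ⟨x, rfl⟩ := hf y
    rw [← map_mul, ← map_mul, bs_central m x]
  -- hence its image in D₄ commutes with sr 0 and sr 1, so χ kills it
  have key : ∀ d : DihedralGroup 4,
      d * DihedralGroup.sr 0 = DihedralGroup.sr 0 * d →
      d * DihedralGroup.sr 1 = DihedralGroup.sr 1 * d → hD d = 1 := by decide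
  have hdu : ρKB (f (BS.a m m ^ m)) * DihedralGroup.sr 0
      = DihedralGroup.sr 0 * ρKB (f (BS.a m m ^ m)) := by
    have := congrArg ρKB (hcen KB.u)
    rw [map_mul, map_mul, rho_u] at this
    exact this
  have hdv : ρKB (f (BS.a m m ^ m)) * DihedralGroup.sr 1
      = DihedralGroup.sr 1 * ρKB (f (BS.a m m ^ m)) := by
    have := congrArg ρKB (hcen KB.v)
    rw [map_mul, map_mul, rho_v] at this
    exact this
  have hchi_am : χKB (f (BS.a m m ^ m)) = 1 := key _ hdu hdv
  -- so χ (f a) = 1 since m is odd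
  have hχa : χKB (f (BS.a m m)) = 1 := by
    obtain ⟨l, rfl⟩ := hm
    rw [map_zpow, map_zpow] at hchi_am
    set x : M2 := χKB (f (BS.a (2*l+1) (2*l+1))) with hx
    have hx2 : x ^ (2 : ℤ) = 1 := by
      rw [show (2:ℤ) = (2:ℕ) from rfl, zpow_natCast, pow_two, sq x]
    calc x = x ^ (2*l+1) := by rw [zpow_add, zpow_one, zpow_mul, hx2, one_zpow, one_mul]
    _ = 1 := hchi_am
  -- every value of χ ∘ f is a power of c
  have hall : ∀ y : BS m m, χKB (f y) ∈ Subgroup.zpowers c := by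
    intro y
    refine PresentedGroup.generated_by _
      (Subgroup.comap ((χKB.comp f).comp (MonoidHom.id _)) (Subgroup.zpowers c)) ?_ y
    intro j
    rw [Subgroup.mem_comap]
    cases j with
    | false =>
      show χKB (f (BS.a m m)) ∈ Subgroup.zpowers c
      rw [hχa]; exact one_mem _
    | true => exact Subgroup.mem_zpowers c
  obtain ⟨yu, hyu⟩ := hf KB.u
  obtain ⟨yv, hyv⟩ := hf KB.v
  have pu : χKB KB.u ∈ Subgroup.zpowers c := hyu ▸ hall yu
  have pv : χKB KB.v ∈ Subgroup.zpowers c := hyv ▸ hall yv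
  have hzp : ∀ j : ℤ, c ^ j = 1 ∨ c ^ j = c := by
    intro j
    have hc2 : c ^ (2 : ℤ) = 1 := by
      rw [show (2:ℤ) = (2:ℕ) from rfl, zpow_natCast, pow_two, sq c]
    rcases Int.even_or_odd j with ⟨l, rfl⟩ | ⟨l, rfl⟩
    · left; rw [← two_mul, zpow_mul, hc2, one_zpow]
    · right; rw [zpow_add, zpow_one, zpow_mul, hc2, one_zpow, one_mul]
  obtain ⟨j, hj⟩ := pu
  obtain ⟨k, hk⟩ := pv
  rw [chi_u] at hj
  rw [chi_v] at hk
  have hj' : c ^ j = Multiplicative.ofAdd ((1:ZMod 2), (0:ZMod 2)) := hj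
  have hk' : c ^ k = Multiplicative.ofAdd ((0:ZMod 2), (1:ZMod 2)) := hk
  rcases hzp j with h1 | h1 <;> rcases hzp k with h2 | h2
  · exact absurd (h1.symm.trans hj') (by decide)
  · exact absurd (h1.symm.trans hj') (by decide)
  · exact absurd (h2.symm.trans hk') (by decide)
  · exact absurd ((h1.symm.trans hj').symm.trans (h2.symm.trans hk')) (by decide)
end

section
/- Let m, n be nonzero integers. If there is a surjective group homomorphism from BS(m,m) onto BS(m',m'), then m' divides m. -/
/-- Auxiliary concrete group: `(ZMod n → ZMod n) ⋊ ZMod n` with shift action. -/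
@[ext] structure QG (n : ℕ) where
  f : ZMod n → ZMod n
  k : ZMod n

namespace QG
variable {n : ℕ}

instance : Mul (QG n) := ⟨fun x y => ⟨fun i => x.f i + y.f (i - x.k), x.k + y.k⟩⟩
instance : One (QG n) := ⟨⟨0, 0⟩⟩
instance : Inv (QG n) := ⟨fun x => ⟨fun i => -x.f (i + x.k), -x.k⟩⟩

@[simp] lemma mul_f (x y : QG n) : (x * y).f = fun i => x.f i + y.f (i - x.k) := rfl
@[simp] lemma mul_k (x y : QG n) : (x * y).k = x.k + y.k := rfl
@[simp] lemma one_f : (1 : QG n).f = 0 := rfl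
@[simp] lemma one_k : (1 : QG n).k = 0 := rfl
@[simp] lemma inv_f (x : QG n) : (x⁻¹).f = fun i => -x.f (i + x.k) := rfl
@[simp] lemma inv_k (x : QG n) : (x⁻¹).k = -x.k := rfl

instance : Group (QG n) where
  mul_assoc a b c := by
    ext i
    · simp only [mul_f, mul_k]
      rw [sub_add_eq_sub_sub, add_assoc]
    · simp only [mul_k]
      ring
  one_mul a := by ext i <;> simp
  mul_one a := by ext i <;> simp
  inv_mul_cancel a := by
    ext i
    · simp only [mul_f, inv_f, inv_k, one_f, sub_neg_eq_add, neg_add_cancel, Pi.zero_apply]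
    · simp only [mul_k, inv_k, one_k, neg_add_cancel]


/-- The element `a` (delta at 0). -/
def AA : QG n := ⟨Pi.single 0 1, 0⟩
/-- The element `t` (shift). -/
def TT : QG n := ⟨0, 1⟩

lemma AA_pow (j : ℕ) : (AA : QG n) ^ j = ⟨Pi.single 0 (j : ZMod n), 0⟩ := by
  induction j with
  | zero =>
    refine QG.ext (funext fun i => ?_) ?_ <;> simp
  | succ j ih =>
    rw [pow_succ, ih]
    refine QG.ext (funext fun i => ?_) ?_
    · simp only [mul_f, AA, sub_zero, Nat.cast_add, Nat.cast_one, Pi.single_apply]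
      by_cases h : i = 0 <;> simp [h]
    · simp [AA]

lemma AA_zpow (j : ℤ) : (AA : QG n) ^ j = ⟨Pi.single 0 (j : ZMod n), 0⟩ := by
  cases j with
  | ofNat j => rw [Int.ofNat_eq_coe, zpow_natCast, AA_pow]; push_cast; rfl
  | negSucc j =>
    rw [zpow_negSucc, AA_pow]
    refine QG.ext (funext fun i => ?_) ?_
    · simp only [inv_f, add_zero, Pi.single_apply, Int.cast_negSucc]
      by_cases h : i = 0 <;> simp [h]
    · simp

variable [NeZero n]

/-- The abelianization-type homomorphism `QG n → ZMod n × ZMod n`. -/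
def sg : QG n →* Multiplicative (ZMod n) × Multiplicative (ZMod n) where
  toFun x := (Multiplicative.ofAdd (∑ i, x.f i), Multiplicative.ofAdd x.k)
  map_one' := by simp
  map_mul' x y := by
    have hs : ∑ i, y.f (i - x.k) = ∑ i, y.f i :=
      Fintype.sum_equiv (Equiv.subRight x.k) _ _ (fun i => rfl)
    simp only [mul_f, mul_k, Finset.sum_add_distrib, hs, Prod.mk_mul_mk, ← ofAdd_add]

@[simp] lemma sg_apply (x : QG n) :
    sg x = (Multiplicative.ofAdd (∑ i, x.f i), Multiplicative.ofAdd x.k) := rfl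

lemma sg_of_comm (w : QG n) (hA : w * AA = AA * w) (hT : w * TT = TT * w) :
    sg w = 1 := by
  -- from commuting with TT : w.f is shift-invariant
  have hT' : ∀ i, w.f i = w.f (i - 1) := by
    intro i
    have := congrArg QG.f hT
    have := congrFun this i
    simpa [TT] using this
  have hconst : ∀ i : ZMod n, w.f i = w.f 0 := by
    have hnat : ∀ j : ℕ, w.f (j : ZMod n) = w.f 0 := by
      intro j
      induction j with
      | zero => simp
      | succ j ih => rw [← ih]; push_cast; rw [hT' ((j : ZMod n) + 1)]; ring_nf
    intro i
    conv_lhs => rw [← ZMod.natCast_rightInverse i]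
    exact hnat _
  -- from commuting with AA : w.k = 0
  have hk : w.k = 0 := by
    by_cases h0 : w.k = 0
    · exact h0
    · exfalso
      have h1 := congrFun (congrArg QG.f hA) w.k
      simp only [mul_f, AA, Pi.single_apply, sub_self, sub_zero, if_pos, if_neg h0] at h1
      have h10 : (1 : ZMod n) = 0 := by
        by_contra hne
        simp [h0, hne] at h1
      have hn1 : n ∣ 1 :=
        (ZMod.natCast_eq_zero_iff 1 n).mp (by push_cast; exact h10)
      have hn : n = 1 := Nat.dvd_one.mp hn1
      subst hn
      exact h0 (Subsingleton.elim _ _)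
  have hsum : ∑ i, w.f i = 0 := by
    calc ∑ i, w.f i = ∑ _i : ZMod n, w.f 0 := Finset.sum_congr rfl (fun i _ => hconst i)
    _ = (Fintype.card (ZMod n)) • w.f 0 := by rw [Finset.sum_const, Finset.card_univ]
    _ = (n : ZMod n) * w.f 0 := by rw [ZMod.card, nsmul_eq_mul]
    _ = 0 := by rw [ZMod.natCast_self, zero_mul]
  simp [hsum, hk]

end QG

theorem stmt4 (m m' : ℤ) (hm : m ≠ 0) (hm' : m' ≠ 0)
    (f : BS m m →* BS m' m') (hf : Function.Surjective f) :
    m' ∣ m := by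
  set n : ℕ := m'.natAbs with hn
  haveI : NeZero n := ⟨Int.natAbs_ne_zero.mpr hm'⟩
  -- `a^{m'} = 1` in `QG n` for `AA`
  have hA1 : (QG.AA : QG n) ^ (m' : ℤ) = 1 := by
    rw [QG.AA_zpow]
    have : ((m' : ℤ) : ZMod n) = 0 := by
      rw [ZMod.intCast_zmod_eq_zero_iff_dvd]
      exact Int.natAbs_dvd.mpr dvd_rfl
    rw [this]
    refine QG.ext (funext fun i => ?_) rfl
    simp
  -- the homomorphism `BS m' m' →* QG n`
  have hrels : ∀ r ∈ bsRels m' m',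
      FreeGroup.lift (fun b => if b then (QG.TT : QG n) else QG.AA) r = 1 := by
    intro r hr
    rw [Set.mem_singleton_iff] at hr
    subst hr
    simp only [map_mul, map_inv, map_zpow, FreeGroup.lift_apply_of, if_pos, if_neg Bool.false_ne_true]
    rw [hA1]
    group
  let ρ : BS m' m' →* QG n := PresentedGroup.toGroup hrels
  have hρa : ρ (BS.a m' m') = QG.AA := PresentedGroup.toGroup.of hrels
  have hρt : ρ (BS.t m' m') = QG.TT := PresentedGroup.toGroup.of hrels
  -- the relation in `BS m m`
  have hrelG : (BS.t m m) * (BS.a m m) ^ (m : ℤ) = (BS.a m m) ^ (m : ℤ) * (BS.t m m) := by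
    have h1 : PresentedGroup.mk (bsRels m m)
        (FreeGroup.of true * (FreeGroup.of false) ^ (m : ℤ) * (FreeGroup.of true)⁻¹ *
          ((FreeGroup.of false) ^ (m : ℤ))⁻¹) = 1 := by
      apply (QuotientGroup.eq_one_iff _).mpr
      exact Subgroup.subset_normalClosure rfl
    simp only [map_mul, map_inv, map_zpow] at h1
    have ha : PresentedGroup.mk (bsRels m m) (FreeGroup.of false) = BS.a m m := rfl
    have ht : PresentedGroup.mk (bsRels m m) (FreeGroup.of true) = BS.t m m := rfl
    rw [ha, ht, mul_inv_eq_one, mul_inv_eq_iff_eq_mul] at h1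
    exact h1
  -- `a^m` is central in `BS m m`
  have hcomm : ∀ g : BS m m, (BS.a m m) ^ (m : ℤ) * g = g * (BS.a m m) ^ (m : ℤ) := by
    have hle : Subgroup.closure (Set.range (PresentedGroup.of : Bool → BS m m)) ≤
        Subgroup.centralizer {(BS.a m m) ^ (m : ℤ)} := by
      rw [Subgroup.closure_le]
      rintro _ ⟨b, rfl⟩
      rw [SetLike.mem_coe, Subgroup.mem_centralizer_iff]
      rintro _ rfl
      cases b
      · exact ((Commute.refl (BS.a m m)).zpow_left m).eq
      · exact hrelG.symm
    rw [PresentedGroup.closure_range_of] at hle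
    intro g
    exact (Subgroup.mem_centralizer_iff.mp (hle (Subgroup.mem_top g))) _ rfl
  -- image of `a^m` commutes with everything in `BS m' m'`
  have hz : ∀ y : BS m' m', f ((BS.a m m) ^ (m : ℤ)) * y = y * f ((BS.a m m) ^ (m : ℤ)) := by
    intro y
    obtain ⟨x, rfl⟩ := hf y
    rw [← map_mul, ← map_mul, hcomm x]
  -- hence `sg (ρ (f a))^m = 1`
  have hsg1 : QG.sg (ρ (f ((BS.a m m) ^ (m : ℤ)))) = 1 := by
    apply QG.sg_of_comm
    · have := congrArg ρ (hz (BS.a m' m'))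
      rw [map_mul, map_mul, hρa] at this
      exact this
    · have := congrArg ρ (hz (BS.t m' m'))
      rw [map_mul, map_mul, hρt] at this
      exact this
  let χ : BS m m →* Multiplicative (ZMod n) × Multiplicative (ZMod n) :=
    QG.sg.comp (ρ.comp f)
  have hχpow : (χ (BS.a m m)) ^ (m : ℤ) = 1 := by
    rw [← map_zpow]
    exact hsg1
  -- χ is surjective onto the whole group and generated by the two images
  have hχa' : QG.sg (ρ (BS.a m' m')) = (Multiplicative.ofAdd 1, 1) := by
    rw [hρa]
    simp [QG.AA]
  have hχt' : QG.sg (ρ (BS.t m' m')) = (1, Multiplicative.ofAdd 1) := by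
    rw [hρt]
    simp [QG.TT]
  have hg1 : ((Multiplicative.ofAdd 1, 1) :
      Multiplicative (ZMod n) × Multiplicative (ZMod n)) ∈ χ.range := by
    obtain ⟨w, hw⟩ := hf (BS.a m' m')
    exact ⟨w, by simp [χ, hw, hχa']⟩
  have hg2 : ((1, Multiplicative.ofAdd 1) :
      Multiplicative (ZMod n) × Multiplicative (ZMod n)) ∈ χ.range := by
    obtain ⟨w, hw⟩ := hf (BS.t m' m')
    exact ⟨w, by simp [χ, hw, hχt']⟩
  have hrange : χ.range = ⊤ := by
    rw [eq_top_iff]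
    intro p _
    have hp : p = ((Multiplicative.ofAdd 1, 1) :
        Multiplicative (ZMod n) × Multiplicative (ZMod n)) ^ ((p.1.toAdd.val : ℕ) : ℤ) *
        ((1, Multiplicative.ofAdd 1) :
        Multiplicative (ZMod n) × Multiplicative (ZMod n)) ^ ((p.2.toAdd.val : ℕ) : ℤ) := by
      ext
      · show p.1 = (Multiplicative.ofAdd 1) ^ ((p.1.toAdd.val : ℕ) : ℤ) * 1 ^ ((p.2.toAdd.val : ℕ) : ℤ)
        rw [one_zpow, mul_one, ← ofAdd_zsmul]
        rw [zsmul_eq_mul, mul_one]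
        push_cast
        rw [ZMod.natCast_val, ZMod.cast_id]
        rfl
      · show p.2 = 1 ^ ((p.1.toAdd.val : ℕ) : ℤ) * (Multiplicative.ofAdd 1) ^ ((p.2.toAdd.val : ℕ) : ℤ)
        rw [one_zpow, one_mul, ← ofAdd_zsmul]
        rw [zsmul_eq_mul, mul_one]
        push_cast
        rw [ZMod.natCast_val, ZMod.cast_id]
        rfl
    rw [hp]
    exact mul_mem (zpow_mem hg1 _) (zpow_mem hg2 _)
  -- the two images of the generators of `BS m m` generate everything
  have hranof : Set.range (PresentedGroup.of : Bool → BS m m)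
      = {BS.a m m, BS.t m m} := by
    ext g
    constructor
    · rintro ⟨b, rfl⟩
      cases b
      · exact Set.mem_insert _ _
      · exact Set.mem_insert_iff.mpr (Or.inr rfl)
    · rintro (rfl | rfl)
      · exact ⟨false, rfl⟩
      · exact ⟨true, rfl⟩
  have hgen : Subgroup.closure ({χ (BS.a m m), χ (BS.t m m)} :
      Set (Multiplicative (ZMod n) × Multiplicative (ZMod n))) = ⊤ := by
    have h1 : Subgroup.map χ (Subgroup.closure (Set.range (PresentedGroup.of : Bool → BS m m))) =
        Subgroup.closure (χ '' (Set.range (PresentedGroup.of : Bool → BS m m))) :=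
      MonoidHom.map_closure χ _
    rw [PresentedGroup.closure_range_of, hranof, Set.image_pair] at h1
    rw [← h1, ← MonoidHom.range_eq_map, hrange]
  obtain ⟨p, q, hpq⟩ := Subgroup.mem_closure_pair.mp
    (hgen ▸ Subgroup.mem_top ((Multiplicative.ofAdd 1, 1) :
      Multiplicative (ZMod n) × Multiplicative (ZMod n)))
  obtain ⟨r, s, hrs⟩ := Subgroup.mem_closure_pair.mp
    (hgen ▸ Subgroup.mem_top ((1, Multiplicative.ofAdd 1) :
      Multiplicative (ZMod n) × Multiplicative (ZMod n)))
  -- turn everything into equations in `ZMod n`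
  set x1 : ZMod n := (χ (BS.a m m)).1.toAdd with hx1d
  set x2 : ZMod n := (χ (BS.a m m)).2.toAdd with hx2d
  set y1 : ZMod n := (χ (BS.t m m)).1.toAdd with hy1d
  set y2 : ZMod n := (χ (BS.t m m)).2.toAdd with hy2d
  have e1 : (p : ZMod n) * x1 + (q : ZMod n) * y1 = 1 := by
    have := congrArg (fun z => Multiplicative.toAdd (Prod.fst z)) hpq
    simpa [toAdd_zpow, zsmul_eq_mul] using this
  have e2 : (p : ZMod n) * x2 + (q : ZMod n) * y2 = 0 := by
    have := congrArg (fun z => Multiplicative.toAdd (Prod.snd z)) hpq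
    simpa [toAdd_zpow, zsmul_eq_mul] using this
  have e3 : (r : ZMod n) * x1 + (s : ZMod n) * y1 = 0 := by
    have := congrArg (fun z => Multiplicative.toAdd (Prod.fst z)) hrs
    simpa [toAdd_zpow, zsmul_eq_mul] using this
  have e4 : (r : ZMod n) * x2 + (s : ZMod n) * y2 = 1 := by
    have := congrArg (fun z => Multiplicative.toAdd (Prod.snd z)) hrs
    simpa [toAdd_zpow, zsmul_eq_mul] using this
  have e5 : (m : ZMod n) * x1 = 0 := by
    have := congrArg (fun z => Multiplicative.toAdd (Prod.fst z)) hχpow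
    simpa [toAdd_zpow, zsmul_eq_mul] using this
  have e6 : (m : ZMod n) * x2 = 0 := by
    have := congrArg (fun z => Multiplicative.toAdd (Prod.snd z)) hχpow
    simpa [toAdd_zpow, zsmul_eq_mul] using this
  have key : (m : ZMod n) = 0 := by
    have k1 : (m : ZMod n) = (m : ZMod n) *
        (((p : ZMod n) * x1 + (q : ZMod n) * y1) * ((r : ZMod n) * x2 + (s : ZMod n) * y2) -
         ((p : ZMod n) * x2 + (q : ZMod n) * y2) * ((r : ZMod n) * x1 + (s : ZMod n) * y1)) := by
      rw [e1, e2, e3, e4]; ring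
    rw [k1]
    linear_combination (((p : ZMod n) * (s : ZMod n) - (q : ZMod n) * (r : ZMod n)) * y2) * e5 -
      (((p : ZMod n) * (s : ZMod n) - (q : ZMod n) * (r : ZMod n)) * y1) * e6
  have : (n : ℤ) ∣ m := (ZMod.intCast_zmod_eq_zero_iff_dvd m n).mp key
  exact Int.natAbs_dvd.mp this
end

section
/- Let G = ⟨a,b | a^m = b^n⟩ with m, n nonzero integers. If m = 2λr and n = 2λs with r, s odd and coprime, then there is a surjective group homomorphism from G onto the Klein bottle group K = ⟨u,v | u² = v²⟩, given by sending a to u^s and b to v^r. -/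
/-- The amalgam `⟨a, b ∣ a^m = b^n⟩` (`true ↦ a`, `false ↦ b`). -/
abbrev Amalgam (m n : ℤ) := PresentedGroup
  ({(FreeGroup.of true) ^ m * ((FreeGroup.of false) ^ n)⁻¹} : Set (FreeGroup Bool))

/-- The generator `a` of the amalgam `⟨a, b ∣ a^m = b^n⟩`. -/
def Amalgam.a (m n : ℤ) : Amalgam m n := PresentedGroup.of true

/-- The generator `b` of the amalgam `⟨a, b ∣ a^m = b^n⟩`. -/
def Amalgam.b (m n : ℤ) : Amalgam m n := PresentedGroup.of false

theorem Subgroup.mem_of_zpow_mem_of_isCoprime {G : Type*} [Group G] {H : Subgroup G} {g : G}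
    {r s : ℤ} (hr : g ^ r ∈ H) (hs : g ^ s ∈ H) (hco : IsCoprime r s) : g ∈ H := by
  obtain ⟨x, y, hxy⟩ := hco
  have : (g ^ r) ^ x * (g ^ s) ^ y ∈ H := mul_mem (zpow_mem hr x) (zpow_mem hs y)
  rwa [← zpow_mul, ← zpow_mul, ← zpow_add, mul_comm r, mul_comm s, hxy, zpow_one] at this

/-- With `z = x² = y²` we get `z^s = (x^s)²` and `z^r = (y^r)²`, so `z` lies in the closure
by Bézout, and then so do `x` and `y`, since `2` is coprime to `s` and to `r`. -/
theorem Subgroup.closure_zpow_pair_eq_of_sq_eq {G : Type*} [Group G] {x y : G} (hxy : x ^ 2 = y ^ 2)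
    {r s : ℤ} (hr : Odd r) (hs : Odd s) (hco : IsCoprime r s) :
    closure {x ^ s, y ^ r} = closure {x, y} := by
  set H := closure {x ^ s, y ^ r}
  have hxs : x ^ s ∈ H := subset_closure (by simp)
  have hyr : y ^ r ∈ H := subset_closure (by simp)
  have hsq : x ^ (2 : ℤ) ∈ H := by
    refine mem_of_zpow_mem_of_isCoprime (r := r) (s := s) ?_ ?_ hco
    · rw [zpow_ofNat, hxy, ← zpow_ofNat, ← zpow_mul, mul_comm, zpow_mul]
      exact zpow_mem hyr 2
    · rw [← zpow_mul, mul_comm, zpow_mul]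
      exact zpow_mem hxs 2
  have hx : x ∈ H := mem_of_zpow_mem_of_isCoprime hsq hxs (Int.isCoprime_two_left.mpr hs)
  have hy : y ∈ H := by
    refine mem_of_zpow_mem_of_isCoprime (r := 2) ?_ hyr (Int.isCoprime_two_left.mpr hr)
    rwa [zpow_ofNat, ← hxy, ← zpow_ofNat]
  refine le_antisymm ((closure_le _).mpr ?_) ((closure_le _).mpr ?_) <;> rintro _ (rfl | rfl)
  exacts [zpow_mem (subset_closure (by simp)) s, zpow_mem (subset_closure (by simp)) r, hx, hy]

theorem KB.u_sq_eq_v_sq : KB.u ^ 2 = KB.v ^ 2 :=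
  PresentedGroup.mk_eq_mk_of_mul_inv_mem rfl

theorem KB.closure_u_v : Subgroup.closure {KB.u, KB.v} = ⊤ := by
  rw [← PresentedGroup.closure_range_of, Bool.range_eq, Set.pair_comm]
  rfl

def Amalgam.lift {m n : ℤ} {G : Type*} [Group G] (x y : G) (h : x ^ m = y ^ n) :
    Amalgam m n →* G :=
  PresentedGroup.toGroup (f := fun i => if i then x else y) <| by
    rintro _ rfl
    simp [h]

@[simp]
theorem Amalgam.lift_a {m n : ℤ} {G : Type*} [Group G] {x y : G} (h : x ^ m = y ^ n) :
    Amalgam.lift x y h (Amalgam.a m n) = x :=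
  PresentedGroup.toGroup.of _

@[simp]
theorem Amalgam.lift_b {m n : ℤ} {G : Type*} [Group G] {x y : G} (h : x ^ m = y ^ n) :
    Amalgam.lift x y h (Amalgam.b m n) = y :=
  PresentedGroup.toGroup.of _

theorem stmt5_general (m n lam r s : ℤ)
    (hmr : m = 2 * lam * r) (hns : n = 2 * lam * s)
    (hr : Odd r) (hs : Odd s) (hco : IsCoprime r s) :
    ∃ f : Amalgam m n →* KB,
      Function.Surjective f ∧ f (Amalgam.a m n) = KB.u ^ s ∧
        f (Amalgam.b m n) = KB.v ^ r := by
  have hrel : (KB.u ^ s) ^ m = (KB.v ^ r) ^ n := by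
    have hu : (KB.u ^ s) ^ m = (KB.u ^ (2 : ℤ)) ^ (lam * r * s) := by
      rw [← zpow_mul, ← zpow_mul, hmr]; ring_nf
    have hv : (KB.v ^ r) ^ n = (KB.v ^ (2 : ℤ)) ^ (lam * r * s) := by
      rw [← zpow_mul, ← zpow_mul, hns]; ring_nf
    rw [hu, hv, zpow_ofNat, zpow_ofNat, KB.u_sq_eq_v_sq]
  refine ⟨Amalgam.lift _ _ hrel, ?_, Amalgam.lift_a hrel, Amalgam.lift_b hrel⟩
  rw [← MonoidHom.range_eq_top, eq_top_iff, ← KB.closure_u_v,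
    ← Subgroup.closure_zpow_pair_eq_of_sq_eq KB.u_sq_eq_v_sq hr hs hco, Subgroup.closure_le]
  rintro _ (rfl | rfl)
  exacts [⟨Amalgam.a m n, Amalgam.lift_a hrel⟩, ⟨Amalgam.b m n, Amalgam.lift_b hrel⟩]

theorem stmt5 (m n lam r s : ℤ) (hm : m ≠ 0) (hn : n ≠ 0)
    (hmr : m = 2 * lam * r) (hns : n = 2 * lam * s)
    (hr : Odd r) (hs : Odd s) (hco : IsCoprime r s) :
    ∃ f : Amalgam m n →* KB,
      Function.Surjective f ∧ f (Amalgam.a m n) = KB.u ^ s ∧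
        f (Amalgam.b m n) = KB.v ^ r :=
  stmt5_general m n lam r s hmr hns hr hs hco
end

section
/- Let G = ⟨a,b | a^m = b^n⟩. If there is a surjective group homomorphism from G onto the Klein bottle group K = ⟨u,v | u² = v²⟩, then m and n are both even and are divisible by exactly the same powers of 2 (i.e., the 2-adic valuations of m and n are equal and positive). -/
/-!
Compose `f` with the surjection of `K` onto `ℤ ⋊ ℤ` (the second factor acting on the first by
sign) and let `A`, `B` be the images of `a`, `b`, with second coordinates `c`, `d`; then
`m * c = n * d`. Since `A`, `B` generate, they do not commute and `c`, `d` are not both even.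
An element with odd second coordinate has central square, while an element with even second
coordinate is central as soon as some nonzero power of it is. If exactly one of `c`, `d` were
odd, `A^m = B^n` would force the other generator to be central; so both are odd. If `m` were
odd, so would be `n`, and `A^m = B^n` would put `A` in `B * Z(K)`. Hence `m` is even and
`v₂ m = v₂ (m * c) = v₂ (n * d) = v₂ n`.
-/

theorem Subgroup.commute_of_closure_pair_eq_top {G : Type*} [Group G] {x y : G}
    (hxy : Commute x y) (h : Subgroup.closure {x, y} = ⊤) (g g' : G) : Commute g g' := by
  have hle := Subgroup.closure_le_centralizer_centralizer ({x, y} : Set G)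
  rw [h] at hle
  refine Set.centralizer_centralizer_comm_of_comm ?_ g (hle trivial) g' (hle trivial)
  rintro a (rfl | rfl) b (rfl | rfl)
  exacts [rfl, hxy, hxy.symm, rfl]

theorem MulEquiv.inv_pow_two (G : Type*) [DivisionCommMonoid G] : MulEquiv.inv G ^ 2 = 1 := by
  ext; simp [pow_two]

theorem padicValInt_eq_of_mul_eq_mul {p : ℕ} [Fact p.Prime] {m n c d : ℤ} (hm : m ≠ 0)
    (hn : n ≠ 0) (hc : ¬(p : ℤ) ∣ c) (hd : ¬(p : ℤ) ∣ d) (h : m * c = n * d) :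
    padicValInt p m = padicValInt p n := by
  have hc0 : c ≠ 0 := by rintro rfl; exact hc (dvd_zero _)
  have hd0 : d ≠ 0 := by rintro rfl; exact hd (dvd_zero _)
  have := congrArg (padicValInt p) h
  rwa [padicValInt.mul hm hc0, padicValInt.mul hn hd0, padicValInt.eq_zero_of_not_dvd hc,
    padicValInt.eq_zero_of_not_dvd hd, add_zero, add_zero] at this

namespace Amalgam

theorem a_zpow_eq_b_zpow (m n : ℤ) : a m n ^ m = b m n ^ n :=
  PresentedGroup.mk_eq_mk_of_mul_inv_mem rfl

theorem closure_a_b_eq_top (m n : ℤ) : Subgroup.closure {a m n, b m n} = ⊤ := by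
  rw [Set.pair_comm, ← PresentedGroup.closure_range_of, Bool.range_eq]
  rfl

end Amalgam

open SemidirectProduct Multiplicative Subgroup

namespace KB

def signAction : Multiplicative ℤ →* MulAut (Multiplicative ℤ) :=
  zpowersHom _ (MulEquiv.inv _)

abbrev Model := Multiplicative ℤ ⋊[signAction] Multiplicative ℤ

theorem signAction_of_even {x : Multiplicative ℤ} (hx : Even (toAdd x)) :
    signAction x = 1 := by
  obtain ⟨k, hk⟩ := hx
  rw [signAction, zpowersHom_apply, hk, ← two_mul, zpow_mul, zpow_two, ← pow_two,
    MulEquiv.inv_pow_two, one_zpow]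

theorem signAction_of_odd {x : Multiplicative ℤ} (hx : Odd (toAdd x)) :
    signAction x = MulEquiv.inv _ := by
  obtain ⟨k, hk⟩ := hx
  rw [signAction, zpowersHom_apply, hk, zpow_add_one, zpow_mul, zpow_two, ← pow_two,
    MulEquiv.inv_pow_two, one_zpow, one_mul]

@[simp]
theorem signAction_ofAdd_one : signAction (ofAdd 1) = MulEquiv.inv _ :=
  signAction_of_odd odd_one

def modelGenerator : Bool → Model
  | true => inr (ofAdd 1)
  | false => ⟨ofAdd 1, ofAdd 1⟩

theorem modelGenerator_rel : ∀ r ∈ ({FreeGroup.of true ^ 2 * (FreeGroup.of false ^ 2)⁻¹} :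
    Set (FreeGroup Bool)), FreeGroup.lift modelGenerator r = 1 := by
  rintro _ rfl
  rw [map_mul, map_inv, mul_inv_eq_one]
  ext <;> simp [pow_two, modelGenerator]

def toModel : KB →* Model := PresentedGroup.toGroup modelGenerator_rel

theorem toModel_surjective : Function.Surjective toModel := by
  have hgen (x : Multiplicative ℤ) : ofAdd 1 ^ toAdd x = x := by
    rw [← ofAdd_zsmul, smul_eq_mul, mul_one, ofAdd_toAdd]
  have hinr : inr (ofAdd 1) ∈ toModel.range := ⟨u, PresentedGroup.toGroup.of modelGenerator_rel⟩
  have hinl : inl (ofAdd 1) ∈ toModel.range := by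
    refine ⟨v * u⁻¹, ?_⟩
    rw [map_mul, map_inv, toModel, u, v, PresentedGroup.toGroup.of, PresentedGroup.toGroup.of]
    ext <;> simp [modelGenerator]
  rw [← MonoidHom.range_eq_top, eq_top_iff]
  intro w _
  rw [← inl_left_mul_inr_right w, ← hgen w.left, ← hgen w.right, map_zpow, map_zpow]
  exact mul_mem (zpow_mem hinl _) (zpow_mem hinr _)

@[simp]
theorem toAdd_right_zpow (w : Model) (k : ℤ) : toAdd (w ^ k).right = k * toAdd w.right := by
  rw [← rightHom_eq_right, map_zpow, toAdd_zpow, smul_eq_mul]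

theorem mul_toAdd_right_eq {A B : Model} {m n : ℤ} (hAB : A ^ m = B ^ n) :
    m * toAdd A.right = n * toAdd B.right := by
  simpa using congrArg (fun w : Model => toAdd w.right) hAB

theorem inr_mem_center {x : Multiplicative ℤ} (hx : Even (toAdd x)) :
    (inr x : Model) ∈ center Model := by
  rw [mem_center_iff]
  intro g
  ext <;> simp [signAction_of_even hx, mul_comm]

theorem left_eq_one_of_mem_center {z : Model} (hz : z ∈ center Model) : z.left = 1 := by
  have h := congrArg (fun w : Model => toAdd w.left) (mem_center_iff.mp hz (inr (ofAdd 1)))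
  simp at h
  exact toAdd_eq_zero.mp (by omega)

theorem zpow_left_of_even_right {w : Model} (hw : Even (toAdd w.right)) (k : ℤ) :
    (w ^ k).left = w.left ^ k := by
  have hcomm : Commute (inl w.left : Model) (inr w.right) :=
    mem_center_iff.mp (inr_mem_center hw) _
  conv_lhs => rw [← inl_left_mul_inr_right w, hcomm.mul_zpow, ← map_zpow inl, ← map_zpow inr,
    ← mk_eq_inl_mul_inr]

theorem mem_center_of_zpow_mem_center {w : Model} (hw : Even (toAdd w.right)) {k : ℤ}
    (hk : k ≠ 0) (h : w ^ k ∈ center Model) : w ∈ center Model := by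
  have hleft : w.left = 1 := by
    have h := congrArg toAdd (left_eq_one_of_mem_center h)
    rw [zpow_left_of_even_right hw, toAdd_zpow, toAdd_one, smul_eq_mul] at h
    exact toAdd_eq_zero.mp ((mul_eq_zero.mp h).resolve_left hk)
  rw [← inl_left_mul_inr_right w, hleft, map_one, one_mul]
  exact inr_mem_center hw

theorem sq_of_odd_right {w : Model} (hw : Odd (toAdd w.right)) : w ^ 2 = inr (w.right ^ 2) := by
  ext <;> simp [pow_two, signAction_of_odd hw]

theorem zpow_mem_center_of_odd_right {w : Model} (hw : Odd (toAdd w.right)) {e : ℤ}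
    (he : Even e) : w ^ e ∈ center Model := by
  obtain ⟨k, rfl⟩ := he
  rw [← two_mul, zpow_mul, zpow_two, ← pow_two, sq_of_odd_right hw]
  exact zpow_mem (inr_mem_center (by simp)) k

def evenRight : Subgroup Model where
  carrier := {w | Even (toAdd w.right)}
  mul_mem' ha hb := ha.add hb
  one_mem' := ⟨0, rfl⟩
  inv_mem' ha := ha.neg

theorem odd_right_or_odd_right_of_closure_eq_top {A B : Model} (hgen : closure {A, B} = ⊤) :
    Odd (toAdd A.right) ∨ Odd (toAdd B.right) := by
  by_contra! h
  simp only [Int.not_odd_iff_even] at h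
  have hle : closure {A, B} ≤ evenRight := by
    rw [closure_le]
    rintro x (rfl | rfl)
    exacts [h.1, h.2]
  rw [hgen] at hle
  exact Int.not_even_one (hle (mem_top (inr (ofAdd 1))))

theorem not_commute_of_closure_eq_top {A B : Model} (hgen : closure {A, B} = ⊤) :
    ¬Commute A B := by
  intro hAB
  have h := commute_of_closure_pair_eq_top hAB hgen (inl (ofAdd 1)) (inr (ofAdd 1))
  simpa using congrArg (fun w : Model => toAdd w.left) h

theorem odd_right_of_zpow_eq {A B : Model} {m n : ℤ} (hm : m ≠ 0) (hAB : A ^ m = B ^ n)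
    (hgen : closure {A, B} = ⊤) : Odd (toAdd A.right) := by
  by_contra hA
  rw [Int.not_odd_iff_even] at hA
  have hB : Odd (toAdd B.right) :=
    (odd_right_or_odd_right_of_closure_eq_top hgen).resolve_left (Int.not_odd_iff_even.mpr hA)
  have hn : Even n := by
    have hnB : Even (n * toAdd B.right) := mul_toAdd_right_eq hAB ▸ hA.mul_left m
    exact (Int.even_mul.mp hnB).resolve_right (Int.not_even_iff_odd.mpr hB)
  have hAc : A ∈ center Model :=
    mem_center_of_zpow_mem_center hA hm (hAB ▸ zpow_mem_center_of_odd_right hB hn)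
  exact not_commute_of_closure_eq_top hgen ((Set.mem_center_iff.mp hAc).comm B)

theorem even_of_zpow_eq {A B : Model} {m n : ℤ} (hAB : A ^ m = B ^ n)
    (hgen : closure {A, B} = ⊤) (hA : Odd (toAdd A.right)) (hB : Odd (toAdd B.right)) :
    Even m := by
  by_contra hm
  rw [Int.not_even_iff_odd] at hm
  have hn : Odd n := (Int.odd_mul.mp (mul_toAdd_right_eq hAB ▸ hm.mul hA)).1
  have hcA := zpow_mem_center_of_odd_right hA (hm.sub_odd odd_one)
  have hcB := zpow_mem_center_of_odd_right hB (hn.sub_odd odd_one)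
  have hA_eq : A = (A ^ (m - 1))⁻¹ * (B ^ (n - 1) * B) :=
    calc A = (A ^ (m - 1))⁻¹ * A ^ m := by group
      _ = (A ^ (m - 1))⁻¹ * (B ^ (n - 1) * B) := by rw [hAB]; group
  refine not_commute_of_closure_eq_top hgen ?_
  rw [hA_eq]
  exact ((Set.mem_center_iff.mp (inv_mem hcA)).comm B).mul_left
    (((Set.mem_center_iff.mp hcB).comm B).mul_left (Commute.refl B))

theorem padicValInt_two_pos_and_eq_of_zpow_eq {A B : Model} {m n : ℤ} (hm : m ≠ 0) (hn : n ≠ 0)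
    (hAB : A ^ m = B ^ n) (hgen : closure {A, B} = ⊤) :
    0 < padicValInt 2 m ∧ padicValInt 2 m = padicValInt 2 n := by
  have hA := odd_right_of_zpow_eq hm hAB hgen
  have hB := odd_right_of_zpow_eq hn hAB.symm (by rwa [Set.pair_comm])
  have h2m : (2 : ℤ) ^ 1 ∣ m := by simpa using (even_of_zpow_eq hAB hgen hA hB).two_dvd
  refine ⟨((padicValInt_dvd_iff 1 m).mp h2m).resolve_left hm,
    padicValInt_eq_of_mul_eq_mul hm hn ?_ ?_ (mul_toAdd_right_eq hAB)⟩
  · exact Int.not_even_iff_odd.mpr hA ∘ even_iff_two_dvd.mpr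
  · exact Int.not_even_iff_odd.mpr hB ∘ even_iff_two_dvd.mpr

end KB

theorem stmt6 (m n : ℤ) (hm : m ≠ 0) (hn : n ≠ 0)
    (f : Amalgam m n →* KB) (hf : Function.Surjective f) :
    0 < padicValInt 2 m ∧ padicValInt 2 m = padicValInt 2 n := by
  set g := KB.toModel.comp f
  apply KB.padicValInt_two_pos_and_eq_of_zpow_eq hm hn
    (A := g (Amalgam.a m n)) (B := g (Amalgam.b m n))
  · rw [← map_zpow, ← map_zpow, Amalgam.a_zpow_eq_b_zpow]
  · rw [← Set.image_pair, ← MonoidHom.map_closure, Amalgam.closure_a_b_eq_top,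
      ← MonoidHom.range_eq_map, MonoidHom.range_eq_top]
    exact KB.toModel_surjective.comp hf
end

section
/- Let G = ⟨a₀,...,a_k | a_i^{q_i} = a_{i+1}^{r_{i+1}}, i = 0,...,k-1⟩ with all q_i, r_i nonzero, and let r₀ be a nonzero integer. Suppose gcd(q_j, r_i) = 1 whenever 0 ≤ i ≤ j ≤ k-1. Then the intersection ⟨a₀^{r₀}⟩ ∩ ⟨a_k⟩ is generated by a₀^{r₀ q₀ q₁ ⋯ q_{k-1}}. -/
/-- The relations `a_i^{q_i} = a_{i+1}^{r_{i+1}}` (for `0 ≤ i ≤ k-1`) of the iterated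
amalgam of copies of `ℤ` over a segment; here `r i` denotes the label `r_{i+1}` of the paper. -/
abbrev segRels (k : ℕ) (q r : ℕ → ℤ) : Set (FreeGroup ℕ) :=
  {w | ∃ i, i < k ∧ w = (FreeGroup.of i) ^ (q i) * ((FreeGroup.of (i + 1)) ^ (r i))⁻¹}

/-- The group `⟨a₀, …, a_k ∣ a_i^{q_i} = a_{i+1}^{r_{i+1}}, 0 ≤ i ≤ k-1⟩`. -/
abbrev Seg (k : ℕ) (q r : ℕ → ℤ) := PresentedGroup (segRels k q r)

/-!
The inclusion `⊆` is the relation `a₀^{q₀⋯q_{j-1}} = a_j^{r₁⋯r_j}`. For `⊇`, push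
`a₀^{r₀m} = a_kⁿ` into the abelianisation `ℤ^ℕ / ⟨q_i e_i - r_{i+1} e_{i+1}⟩`: writing
`r₀m e₀ - n e_k = ∑ c_i (q_i e_i - r_{i+1} e_{i+1})` and comparing the coordinates `0, …, k-1`
gives the chain `q₀c₀ = r₀m`, `q_{j+1}c_{j+1} = r_{j+1}c_j`. Since `q_j` is coprime to
`r₀, r₁, …, r_j`, each step of the chain splits off one more factor `q_j` of `m`.
-/

open Finset

theorem prod_dvd_of_mul_succ_eq_mul {R : Type*} [CommRing R] [IsDomain R] {q ρ d : ℕ → R} {k : ℕ}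
    (hcop : ∀ i j, i ≤ j → j < k → IsCoprime (q j) (ρ i))
    (hd : ∀ j < k, q j * d (j + 1) = ρ j * d j) :
    ∏ j ∈ range k, q j ∣ d 0 := by
  have telescope : ∀ j ≤ k, (∏ i ∈ range j, q i) * d j = (∏ i ∈ range j, ρ i) * d 0 := by
    intro j hj
    induction j with
    | zero => simp
    | succ j ih =>
      rw [prod_range_succ, prod_range_succ, mul_assoc, hd j hj]
      linear_combination ρ j * ih (by omega)
  suffices ∀ j ≤ k, ∏ i ∈ range j, q i ∣ d 0 from this k le_rfl
  intro j hj
  induction j with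
  | zero => simp
  | succ j ih =>
    obtain ⟨e, he⟩ := ih (by omega)
    rcases eq_or_ne (∏ i ∈ range j, q i) 0 with h0 | h0
    · simp [he, h0]
    have hcopj : IsCoprime (q j) (∏ i ∈ range (j + 1), ρ i) :=
      IsCoprime.prod_right fun i hi => hcop i j (Nat.lt_succ_iff.mp (mem_range.mp hi)) hj
    have hqj : q j ∣ (∏ i ∈ range (j + 1), ρ i) * e := by
      have h := telescope (j + 1) hj
      rw [prod_range_succ q j, he] at h
      exact ⟨d (j + 1), mul_left_cancel₀ h0 (by linear_combination -h)⟩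
    rw [prod_range_succ, he]
    exact mul_dvd_mul_left _ (hcopj.dvd_of_dvd_mul_left hqj)

theorem ofAdd_mk_single_one_zpow {ι : Type*} [DecidableEq ι] {H : AddSubgroup (ι → ℤ)}
    (i : ι) (a : ℤ) :
    Multiplicative.ofAdd ((Pi.single i 1 : ι → ℤ) : (ι → ℤ) ⧸ H) ^ a =
      .ofAdd ((Pi.single i a : ι → ℤ) : (ι → ℤ) ⧸ H) := by
  rw [← ofAdd_zsmul, ← QuotientAddGroup.mk_zsmul, ← Pi.single_smul', smul_eq_mul, mul_one]

namespace Seg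

variable {k : ℕ} {q r : ℕ → ℤ}

theorem of_zpow_eq {i : ℕ} (hi : i < k) :
    (PresentedGroup.of i : Seg k q r) ^ q i = PresentedGroup.of (i + 1) ^ r i := by
  have h := PresentedGroup.mk_eq_mk_of_mul_inv_mem (rels := segRels k q r) ⟨i, hi, rfl⟩
  rwa [map_zpow, map_zpow] at h

theorem of_zero_zpow_prod {j : ℕ} (hj : j ≤ k) :
    (PresentedGroup.of 0 : Seg k q r) ^ ∏ i ∈ range j, q i =
      PresentedGroup.of j ^ ∏ i ∈ range j, r i := by
  induction j with
  | zero => simp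
  | succ j ih =>
    rw [prod_range_succ, prod_range_succ, zpow_mul, ih (by omega), ← zpow_mul, mul_comm,
      zpow_mul, of_zpow_eq hj, ← zpow_mul, mul_comm]

variable (q r) in
/-- `relMap q r c = ∑ i, c i • (q i • eᵢ - r i • eᵢ₊₁)`, computed coordinatewise. Its range also
contains the relation vectors for `i ≥ k`; they do no harm, as only coordinates `< k` are read off. -/
def relMap : (ℕ → ℤ) →+ (ℕ → ℤ) :=
  AddMonoidHom.mk' (fun c t => q t * c t - match t with | 0 => 0 | j + 1 => r j * c j)
    fun c c' => by ext (_ | t) <;> simp only [Pi.add_apply] <;> ring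

theorem relMap_single (i : ℕ) :
    relMap q r (Pi.single i 1) = Pi.single i (q i) - Pi.single (i + 1) (r i) := by
  ext (_ | t) <;> simp only [relMap, AddMonoidHom.mk'_apply, Pi.sub_apply, Pi.single_apply] <;> grind

variable (k q r) in
def toAbelian : Seg k q r →* Multiplicative ((ℕ → ℤ) ⧸ (relMap q r).range) :=
  PresentedGroup.toGroup (f := fun i => .ofAdd (Pi.single i 1 : ℕ → ℤ)) <| by
    rintro _ ⟨i, hi, rfl⟩
    rw [map_mul, map_inv, map_zpow, map_zpow, FreeGroup.lift_apply_of, FreeGroup.lift_apply_of,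
      ofAdd_mk_single_one_zpow, ofAdd_mk_single_one_zpow, mul_inv_eq_one,
      EmbeddingLike.apply_eq_iff_eq, QuotientAddGroup.eq_iff_sub_mem]
    exact ⟨Pi.single i 1, relMap_single i⟩

theorem toAbelian_of_zpow (i : ℕ) (a : ℤ) :
    toAbelian k q r (PresentedGroup.of i ^ a) = .ofAdd (Pi.single i a : ℕ → ℤ) := by
  rw [map_zpow, toAbelian, PresentedGroup.toGroup.of, ofAdd_mk_single_one_zpow]

theorem single_sub_single_mem_range_relMap {a n : ℤ}
    (h : (PresentedGroup.of 0 : Seg k q r) ^ a = PresentedGroup.of k ^ n) :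
    Pi.single 0 a - Pi.single k n ∈ (relMap q r).range := by
  have h' := congrArg (toAbelian k q r) h
  rwa [toAbelian_of_zpow, toAbelian_of_zpow, EmbeddingLike.apply_eq_iff_eq,
    QuotientAddGroup.eq_iff_sub_mem] at h'

theorem prod_dvd_of_zpow_eq {r0 m n : ℤ} (hcop0 : ∀ j < k, IsCoprime (q j) r0)
    (hcop : ∀ i j, i < j → j < k → IsCoprime (q j) (r i))
    (h : (PresentedGroup.of 0 : Seg k q r) ^ (r0 * m) = PresentedGroup.of k ^ n) :
    ∏ i ∈ range k, q i ∣ m := by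
  obtain ⟨c, hc⟩ := single_sub_single_mem_range_relMap h
  refine prod_dvd_of_mul_succ_eq_mul (ρ := fun | 0 => r0 | i + 1 => r i)
    (d := fun | 0 => m | j + 1 => c j) ?_ ?_
  · rintro (_ | i) j hij hj
    exacts [hcop0 j hj, hcop i j hij hj]
  · rintro (_ | j) hj
    · simpa [relMap, hj.ne] using congrFun hc 0
    · simpa [relMap, hj.ne, sub_eq_zero] using congrFun hc (j + 1)

end Seg

theorem stmt8_general (k : ℕ) (q r : ℕ → ℤ)
    (r0 : ℤ)
    (hcop0 : ∀ j, j + 1 ≤ k → Int.gcd (q j) r0 = 1)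
    (hcop : ∀ i j, i + 1 ≤ j → j + 1 ≤ k → Int.gcd (q j) (r i) = 1) :
    Subgroup.zpowers ((PresentedGroup.of 0 : Seg k q r) ^ (r0 * ∏ i ∈ Finset.range k, q i)) =
      Subgroup.zpowers ((PresentedGroup.of 0 : Seg k q r) ^ r0) ⊓
        Subgroup.zpowers (PresentedGroup.of k : Seg k q r) := by
  apply le_antisymm
  · rw [Subgroup.zpowers_le, Subgroup.mem_inf, Subgroup.mem_zpowers_iff, Subgroup.mem_zpowers_iff]
    refine ⟨⟨∏ i ∈ range k, q i, (zpow_mul _ _ _).symm⟩, r0 * ∏ i ∈ range k, r i, ?_⟩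
    rw [mul_comm, zpow_mul, ← Seg.of_zero_zpow_prod le_rfl, ← zpow_mul, mul_comm]
  · intro x hx
    rw [Subgroup.mem_inf, Subgroup.mem_zpowers_iff, Subgroup.mem_zpowers_iff] at hx
    obtain ⟨⟨m, rfl⟩, n, hn⟩ := hx
    rw [Subgroup.mem_zpowers_iff]
    obtain ⟨s, rfl⟩ : ∏ i ∈ range k, q i ∣ m := Seg.prod_dvd_of_zpow_eq (n := n)
      (fun j hj => Int.isCoprime_iff_gcd_eq_one.mpr (hcop0 j hj))
      (fun i j hij hj => Int.isCoprime_iff_gcd_eq_one.mpr (hcop i j hij hj)) (by rw [zpow_mul, hn])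
    exact ⟨s, by rw [← zpow_mul, ← zpow_mul, mul_assoc]⟩

theorem stmt8 (k : ℕ) (q r : ℕ → ℤ) (hq : ∀ i, q i ≠ 0) (hr : ∀ i, r i ≠ 0)
    (r0 : ℤ) (hr0 : r0 ≠ 0)
    (hcop0 : ∀ j, j + 1 ≤ k → Int.gcd (q j) r0 = 1)
    (hcop : ∀ i j, i + 1 ≤ j → j + 1 ≤ k → Int.gcd (q j) (r i) = 1) :
    Subgroup.zpowers ((PresentedGroup.of 0 : Seg k q r) ^ (r0 * ∏ i ∈ Finset.range k, q i)) =
      Subgroup.zpowers ((PresentedGroup.of 0 : Seg k q r) ^ r0) ⊓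
        Subgroup.zpowers (PresentedGroup.of k : Seg k q r) :=
  stmt8_general k q r r0 hcop0 hcop
end

section
/- Let G be a group acting on a tree T with infinite cyclic edge and vertex stabilizers, let f: G → G' be a group homomorphism, and suppose a ∈ G fixes a vertex of T. If G' also acts on a tree T' with cyclic stabilizers and f(a) acts hyperbolically on T' (fixes no point), then the image f(G) stabilizes a line in T' (namely the axis of f(a)); in particular f(G) is virtually cyclic-by-cyclic (elementary). -/
/-!
Both `a` and `g a g⁻¹` fix vertices of `T`. Along a path of `T` joining these vertices, consecutive
vertex stabilizers are cyclic and meet in nontrivial edge stabilizers, so `a` and `g a g⁻¹` have a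
common nontrivial power `a ^ m = (g a g⁻¹) ^ n`; hence `f a ^ m` is the conjugate of `f a ^ n` by
`f g`.

In `T'`, let `v₀` be a vertex moved least by `α = f a`, say by `d ≥ 1`. The translates by the powers
of `α` of a geodesic from `v₀` to `α v₀` form a line: it cannot backtrack where two translates meet,
since that would be an inversion (`d = 1`) or would produce a vertex moved less than `d` (`d ≥ 2`).
A vertex at distance `r` from this line is moved by `α ^ k` exactly `|k| d + 2 r`, so for every
`k ≠ 0` the line is the set of vertices moved least by `α ^ k`. That set is equivariant under
conjugation, so `f g` maps the line (for `f a ^ n`) onto the line (for `f a ^ m`): it preserves it.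
-/

open scoped Pointwise

theorem apply_add_mul_eq_pow_smul {M W : Type*} [Monoid M] [MulAction M W] {ℓ : ℤ → W}
    {α : M} {d : ℕ} (hℓ : ∀ i, ℓ (i + d) = α • ℓ i) (m : ℕ) (i : ℤ) :
    ℓ (i + (m * d : ℕ)) = α ^ m • ℓ i := by
  induction m with
  | zero => simp
  | succ m ih => rw [Nat.succ_mul, Nat.cast_add, ← add_assoc, hℓ, ih, pow_succ', mul_smul]

theorem Int.forall_of_forall_lt_of_add_mul {d : ℕ} (hd : d ≠ 0) {Q : ℤ → Prop}
    (hQ : ∀ i t, Q i → Q (i + d * t)) (h : ∀ j < d, Q j) (i : ℤ) : Q i := by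
  have h0 := Int.emod_nonneg i (b := d) (by omega)
  have h1 := Int.emod_lt_of_pos i (b := d) (by omega)
  have := hQ _ (i / d) (h (i % d).toNat (by omega))
  rwa [Int.toNat_of_nonneg h0, Int.emod_add_mul_ediv] at this

namespace SimpleGraph

variable {W : Type*} {Γ : SimpleGraph W}

theorem IsAcyclic.isPath_append (hΓ : Γ.IsAcyclic) {u v w : W} {p : Γ.Walk u v}
    {q : Γ.Walk v w} (hp : p.IsPath) (hq : q.IsPath)
    (hpq : ¬p.Nil → ¬q.Nil → p.penultimate ≠ q.snd) : (p.append q).IsPath := by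
  rw [hΓ.isPath_iff_isChain] at hp hq ⊢
  rw [Walk.edges_append, List.isChain_append]
  refine ⟨hp, hq, fun e he e' he' => ?_⟩
  obtain ⟨hpe, rfl⟩ := List.mem_getLast?_eq_getLast he
  have hqe : q.edges ≠ [] := by
    rintro h
    simp [h] at he'
  rw [List.head?_eq_some_head hqe, Option.mem_some_iff] at he'
  subst he'
  rw [Walk.getLast_edges_eq_mk_penultimate_end, Walk.head_edges_eq_mk_start_snd, Ne,
    Sym2.eq_swap, Sym2.congr_right]
  exact hpq (Walk.edges_eq_nil.not.mp hpe) (Walk.edges_eq_nil.not.mp hqe)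

theorem IsTree.length_eq_dist_of_isPath (hΓ : Γ.IsTree) {u v : W} {p : Γ.Walk u v}
    (hp : p.IsPath) : p.length = Γ.dist u v := by
  obtain ⟨q, hq, hlen⟩ := hΓ.connected.exists_path_of_dist u v
  have : p = q :=
    congrArg Subtype.val ((hΓ.isAcyclic.subsingleton_path u v).elim ⟨p, hp⟩ ⟨q, hq⟩)
  rw [this, hlen]

theorem IsTree.dist_add_dist_eq_of_ne (hΓ : Γ.IsTree) {x x' y z' z : W}
    (hx'y : Γ.Adj x' y) (hyz' : Γ.Adj y z') (hne : x' ≠ z')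
    (hx : Γ.dist x x' + 1 = Γ.dist x y) (hz : Γ.dist z' z + 1 = Γ.dist y z) :
    Γ.dist x y + Γ.dist y z = Γ.dist x z := by
  obtain ⟨p, hp⟩ := hΓ.connected.exists_walk_length_eq_dist x x'
  obtain ⟨q, hq⟩ := hΓ.connected.exists_walk_length_eq_dist z' z
  have hpath : ((p.concat hx'y).append (q.cons hyz')).IsPath := by
    refine hΓ.isAcyclic.isPath_append ?_ ?_ fun _ _ => ?_
    · exact Walk.isPath_of_length_eq_dist _ (by simp [hp, hx])
    · exact Walk.isPath_of_length_eq_dist _ (by simp [hq, hz])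
    · rwa [Walk.penultimate_concat, Walk.snd_cons]
  rw [← hΓ.length_eq_dist_of_isPath hpath]
  simp only [Walk.length_append, Walk.length_concat, Walk.length_cons]
  omega

theorem Connected.exists_adj_dist_add_one_eq (hΓ : Γ.Connected) {x y : W} (hxy : x ≠ y) :
    ∃ u, Γ.Adj u y ∧ Γ.dist x u + 1 = Γ.dist x y := by
  obtain ⟨p, hp⟩ := hΓ.exists_walk_length_eq_dist x y
  have hnil : ¬p.Nil := fun h => hxy h.eq
  refine ⟨p.penultimate, p.adj_penultimate hnil, le_antisymm ?_ ?_⟩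
  · have := dist_le p.dropLast
    have := p.length_dropLast_add_one hnil
    omega
  · have := hΓ.dist_triangle (u := x) (v := p.penultimate) (w := y)
    rwa [dist_eq_one_iff_adj.mpr (p.adj_penultimate hnil)] at this

theorem Walk.dist_getVert_le {u v : W} (p : Γ.Walk u v) {i j : ℕ} (hij : i ≤ j) :
    Γ.dist (p.getVert i) (p.getVert j) ≤ j - i := by
  have h := dist_le ((p.drop i).take (j - i))
  rw [Walk.take_length] at h
  rw [← Nat.add_sub_cancel' hij, ← Walk.drop_getVert]
  omega

structure IsLine (Γ : SimpleGraph W) (ℓ : ℤ → W) : Prop where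
  adj : ∀ i, Γ.Adj (ℓ i) (ℓ (i + 1))
  ne_add_two : ∀ i, ℓ i ≠ ℓ (i + 2)

namespace IsLine

variable {ℓ : ℤ → W}

theorem dist_eq (hℓ : Γ.IsLine ℓ) (hΓ : Γ.IsTree) (n : ℕ) (i : ℤ) :
    Γ.dist (ℓ i) (ℓ (i + n)) = n := by
  induction n using Nat.twoStepInduction generalizing i with
  | zero => simp
  | one => simpa using hℓ.adj i
  | more n ih₀ ih₁ =>
    have hstep := dist_eq_one_iff_adj.mpr (hℓ.adj i)
    have h := hΓ.dist_add_dist_eq_of_ne (x := ℓ i) (z := ℓ (i + (n + 2 : ℕ)))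
      (hℓ.adj i) (hℓ.adj (i + 1)) (by simpa [add_assoc] using hℓ.ne_add_two i) (by simp [hstep])
      (by rw [show i + ((n + 2 : ℕ) : ℤ) = i + 1 + 1 + n by push_cast; ring, ih₀,
            show i + 1 + 1 + (n : ℤ) = i + 1 + (n + 1 : ℕ) by push_cast; ring, ih₁])
    rw [← h, hstep, show i + ((n + 2 : ℕ) : ℤ) = i + 1 + (n + 1 : ℕ) by push_cast; ring, ih₁]
    ring

theorem injective (hℓ : Γ.IsLine ℓ) (hΓ : Γ.IsTree) : Function.Injective ℓ := by
  intro i j h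
  by_contra hij
  wlog hlt : i < j generalizing i j
  · exact this h.symm (Ne.symm hij) (lt_of_le_of_ne (not_lt.mp hlt) (Ne.symm hij))
  have := hℓ.dist_eq hΓ (j - i).toNat i
  rw [show i + ((j - i).toNat : ℤ) = j by omega, ← h, dist_self] at this
  omega

theorem dist_eq_add_of_nearest (hℓ : Γ.IsLine ℓ) (hΓ : Γ.IsTree) {v : W} {i : ℤ}
    (hi : ∀ t, Γ.dist v (ℓ i) ≤ Γ.dist v (ℓ t)) (n : ℕ) :
    Γ.dist v (ℓ (i + n)) = Γ.dist v (ℓ i) + n := by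
  by_cases hv : v = ℓ i
  · simp [hv, hℓ.dist_eq hΓ]
  obtain ⟨u, hu, hdu⟩ := hΓ.connected.exists_adj_dist_add_one_eq hv
  rcases n with _ | n
  · simp
  have hne : u ≠ ℓ (i + 1) := by
    rintro rfl
    have := hi (i + 1)
    omega
  have h := hΓ.dist_add_dist_eq_of_ne (z := ℓ (i + (n + 1 : ℕ))) hu (hℓ.adj i) hne hdu (by
    rw [show i + ((n + 1 : ℕ) : ℤ) = i + 1 + n by push_cast; ring, hℓ.dist_eq hΓ,
      show i + 1 + (n : ℤ) = i + (n + 1 : ℕ) by push_cast; ring, hℓ.dist_eq hΓ])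
  rw [← h, hℓ.dist_eq hΓ]

end IsLine

section Action

variable {G : Type*} [Group G] [MulAction G W]

theorem Connected.dist_smul (hΓ : Γ.Connected)
    (hact : ∀ (g : G) (u v : W), Γ.Adj u v → Γ.Adj (g • u) (g • v)) (g : G) (u v : W) :
    Γ.dist (g • u) (g • v) = Γ.dist u v := by
  have hle : ∀ (g : G) (u v : W), Γ.dist (g • u) (g • v) ≤ Γ.dist u v := by
    intro g u v
    obtain ⟨p, hp⟩ := hΓ.exists_walk_length_eq_dist u v
    rw [← hp, ← Walk.length_map (⟨(g • ·), hact g _ _⟩ : Γ →g Γ)]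
    exact dist_le _
  refine le_antisymm (hle g u v) ?_
  simpa using hle g⁻¹ (g • u) (g • v)

variable (Γ) in
def minDisplacementSet (g : G) : Set W :=
  {v | ∀ w, Γ.dist v (g • v) ≤ Γ.dist w (g • w)}

theorem Connected.minDisplacementSet_conj (hΓ : Γ.Connected)
    (hact : ∀ (g : G) (u v : W), Γ.Adj u v → Γ.Adj (g • u) (g • v)) (g h : G) :
    Γ.minDisplacementSet (h * g * h⁻¹) = h • Γ.minDisplacementSet g := by
  have hdisp (v : W) : Γ.dist v ((h * g * h⁻¹) • v) = Γ.dist (h⁻¹ • v) (g • h⁻¹ • v) := by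
    rw [← hΓ.dist_smul hact h (h⁻¹ • v)]
    simp [mul_smul]
  ext v
  simp only [minDisplacementSet, Set.mem_smul_set_iff_inv_smul_mem, Set.mem_ofPred_eq, hdisp]
  exact ⟨fun hv w => by simpa using hv (h • w), fun hv w => hv _⟩

theorem Connected.minDisplacementSet_inv (hΓ : Γ.Connected)
    (hact : ∀ (g : G) (u v : W), Γ.Adj u v → Γ.Adj (g • u) (g • v)) (g : G) :
    Γ.minDisplacementSet g⁻¹ = Γ.minDisplacementSet g := by
  have hdisp (v : W) : Γ.dist v (g⁻¹ • v) = Γ.dist v (g • v) := by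
    rw [← hΓ.dist_smul hact g, smul_inv_smul, dist_comm]
  simp only [minDisplacementSet, hdisp]

namespace IsLine

variable {α : G} {d : ℕ} {ℓ : ℤ → W}

theorem dist_pow_smul_eq (hℓ : Γ.IsLine ℓ) (hΓ : Γ.IsTree)
    (hact : ∀ (g : G) (u v : W), Γ.Adj u v → Γ.Adj (g • u) (g • v)) (hd : d ≠ 0)
    (hα : ∀ i, ℓ (i + d) = α • ℓ i) {m : ℕ} (hm : m ≠ 0) {v : W} {i : ℤ}
    (hi : ∀ t, Γ.dist v (ℓ i) ≤ Γ.dist v (ℓ t)) :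
    Γ.dist v (α ^ m • v) = Γ.dist v (ℓ i) + m * d + Γ.dist v (ℓ i) := by
  have hshift := apply_add_mul_eq_pow_smul hα m
  obtain ⟨n, hn⟩ : ∃ n, m * d = n + 1 := Nat.exists_eq_add_one.mpr (by positivity)
  by_cases hv : v = ℓ i
  · rw [hv, ← hshift, hℓ.dist_eq hΓ, dist_self]
    simp
  -- `u` precedes `ℓ i` on a geodesic from `v`, so it is off the line
  obtain ⟨u, hu, hdu⟩ := hΓ.connected.exists_adj_dist_add_one_eq hv
  have hne : ℓ (i + n) ≠ α ^ m • u := by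
    intro he
    rw [show i + n = i - 1 + (m * d : ℕ) by push_cast [hn]; ring, hshift] at he
    have := hi (i - 1)
    rw [smul_left_cancel _ he] at this
    omega
  have hgate := hℓ.dist_eq_add_of_nearest hΓ hi
  have h := hΓ.dist_add_dist_eq_of_ne (x := v) (z := α ^ m • v)
    (by rw [← hshift, hn]; push_cast; rw [← add_assoc]; exact hℓ.adj _)
    (hact _ _ _ hu.symm) hne
    (by rw [← hshift, hn, hgate, hgate]; ring)
    (by rw [hΓ.connected.dist_smul hact, hΓ.connected.dist_smul hact, dist_comm, hdu, dist_comm])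
  rw [← h, hΓ.connected.dist_smul hact, ← hshift, hgate, dist_comm (u := ℓ i)]

theorem minDisplacementSet_zpow_eq_range (hℓ : Γ.IsLine ℓ) (hΓ : Γ.IsTree)
    (hact : ∀ (g : G) (u v : W), Γ.Adj u v → Γ.Adj (g • u) (g • v)) (hd : d ≠ 0)
    (hα : ∀ i, ℓ (i + d) = α • ℓ i) {m : ℤ} (hm : m ≠ 0) :
    Γ.minDisplacementSet (α ^ m) = Set.range ℓ := by
  suffices key : ∀ m : ℕ, m ≠ 0 → Γ.minDisplacementSet (α ^ m) = Set.range ℓ by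
    rcases Int.natAbs_eq m with h | h <;> rw [h]
    · rw [zpow_natCast]
      exact key _ (by omega)
    · rw [zpow_neg, zpow_natCast, hΓ.connected.minDisplacementSet_inv hact]
      exact key _ (by omega)
  intro m hm
  have hdisp (v : W) : ∃ i, Γ.dist v (α ^ m • v) = Γ.dist v (ℓ i) + m * d + Γ.dist v (ℓ i) :=
    ⟨_, hℓ.dist_pow_smul_eq hΓ hact hd hα hm fun t => Function.argmin_le (Γ.dist v ∘ ℓ) t⟩
  have hline (t : ℤ) : Γ.dist (ℓ t) (α ^ m • ℓ t) = m * d := by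
    rw [← apply_add_mul_eq_pow_smul hα, hℓ.dist_eq hΓ]
  ext v
  constructor
  · intro hv
    obtain ⟨i, hi⟩ := hdisp v
    have := hv (ℓ 0)
    rw [hline, hi] at this
    exact ⟨i, (hΓ.connected.dist_eq_zero_iff.mp (by omega)).symm⟩
  · rintro ⟨t, rfl⟩ w
    obtain ⟨i, hi⟩ := hdisp w
    rw [hline, hi]
    omega

end IsLine

section OrbitLine

variable {α : G} {v : W} (p : Γ.Walk v (α • v))

/-- The concatenation `⋯, α⁻¹ • p, p, α • p, α ^ 2 • p, ⋯` of the translates of `p`. -/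
def Walk.orbitLine (i : ℤ) : W :=
  α ^ (i / p.length) • p.getVert (i % p.length).toNat

theorem Walk.orbitLine_add_mul_length (hp : p.length ≠ 0) (i t : ℤ) :
    p.orbitLine (i + p.length * t) = α ^ t • p.orbitLine i := by
  rw [orbitLine, orbitLine, Int.add_mul_ediv_left _ _ (by exact_mod_cast hp),
    Int.add_mul_emod_self_left, add_comm, zpow_add, mul_smul]

theorem Walk.orbitLine_natCast (hp : p.length ≠ 0) {j : ℕ} (hj : j ≤ p.length) :
    p.orbitLine j = p.getVert j := by
  rcases hj.lt_or_eq with hj | rfl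
  · have h0 : (0 : ℤ) ≤ j := by omega
    have h1 : (j : ℤ) < p.length := by omega
    simp [orbitLine, Int.ediv_eq_zero_of_lt h0 h1, Int.emod_eq_of_lt h0 h1]
  · simpa [orbitLine] using p.orbitLine_add_mul_length hp 0 1

theorem Walk.isLine_orbitLine (hact : ∀ (g : G) (u v : W), Γ.Adj u v → Γ.Adj (g • u) (g • v))
    (hpath : p.IsPath) (hp : p.length ≠ 0) (hseam : p.penultimate ≠ α • p.snd) :
    Γ.IsLine p.orbitLine where
  adj := by
    refine Int.forall_of_forall_lt_of_add_mul
      (Q := fun i => Γ.Adj (p.orbitLine i) (p.orbitLine (i + 1))) hp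
      (fun i t h => ?_) (fun j hj => ?_)
    · rw [add_right_comm, p.orbitLine_add_mul_length hp, p.orbitLine_add_mul_length hp]
      exact hact _ _ _ h
    · rw [show (j : ℤ) + 1 = (j + 1 : ℕ) by push_cast; ring, p.orbitLine_natCast hp hj.le,
        p.orbitLine_natCast hp hj]
      exact p.adj_getVert_succ hj
  ne_add_two := by
    refine Int.forall_of_forall_lt_of_add_mul
      (Q := fun i => p.orbitLine i ≠ p.orbitLine (i + 2)) hp
      (fun i t h he => h ?_) (fun j hj => ?_)
    · rw [add_right_comm, p.orbitLine_add_mul_length hp, p.orbitLine_add_mul_length hp] at he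
      exact smul_left_cancel _ he
    rw [p.orbitLine_natCast hp hj.le]
    by_cases hj2 : j + 2 ≤ p.length
    · rw [show (j : ℤ) + 2 = (j + 2 : ℕ) by push_cast; ring, p.orbitLine_natCast hp hj2]
      intro he
      have := hpath.getVert_injOn (by simp; omega) (by simpa using hj2) he
      omega
    · rw [show (j : ℤ) + 2 = (1 : ℕ) + p.length * 1 by push_cast; omega,
        p.orbitLine_add_mul_length hp, p.orbitLine_natCast hp (by omega), zpow_one,
        show j = p.length - 1 by omega]
      exact hseam

end OrbitLine

theorem IsTree.exists_isLine_translate (hΓ : Γ.IsTree)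
    (hact : ∀ (g : G) (u v : W), Γ.Adj u v → Γ.Adj (g • u) (g • v))
    (hnoinv : ∀ (g : G) (u v : W), Γ.Adj u v → ¬(g • u = v ∧ g • v = u))
    {α : G} (hα : ∀ v : W, α • v ≠ v) :
    ∃ (ℓ : ℤ → W) (d : ℕ), Γ.IsLine ℓ ∧ d ≠ 0 ∧ ∀ i, ℓ (i + d) = α • ℓ i := by
  have hc := hΓ.connected
  have := hc.nonempty
  set v₀ := Function.argmin fun v => Γ.dist v (α • v)
  have hmin (v : W) : Γ.dist v₀ (α • v₀) ≤ Γ.dist v (α • v) :=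
    Function.argmin_le (fun v => Γ.dist v (α • v)) v
  obtain ⟨p, hpath, hlen⟩ := hc.exists_path_of_dist v₀ (α • v₀)
  have hp : p.length ≠ 0 := by
    rw [hlen]
    exact (hc.pos_dist_of_ne (hα v₀).symm).ne'
  have hseam : p.penultimate ≠ α • p.snd := by
    intro h
    by_cases h1 : p.length = 1
    · refine hnoinv α v₀ (α • v₀) (dist_eq_one_iff_adj.mp (hlen ▸ h1)) ⟨rfl, ?_⟩
      rwa [Walk.penultimate, Walk.snd, h1, Nat.sub_self, Walk.getVert_zero, ← h1,
        Walk.getVert_length, eq_comm] at h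
    · have := p.dist_getVert_le (i := 1) (j := p.length - 1) (by omega)
      rw [← Walk.penultimate, h] at this
      have := hmin p.snd
      dsimp only [Walk.snd] at *
      omega
  exact ⟨p.orbitLine, p.length, p.isLine_orbitLine hact hpath hp hseam, hp,
    fun i => by simpa using p.orbitLine_add_mul_length hp i 1⟩

theorem IsTree.exists_axis (hΓ : Γ.IsTree)
    (hact : ∀ (g : G) (u v : W), Γ.Adj u v → Γ.Adj (g • u) (g • v))
    (hnoinv : ∀ (g : G) (u v : W), Γ.Adj u v → ¬(g • u = v ∧ g • v = u))
    {α : G} (hα : ∀ v : W, α • v ≠ v) :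
    ∃ ℓ : ℤ → W, Γ.IsLine ℓ ∧ Function.Injective ℓ ∧
      ∀ m : ℤ, m ≠ 0 → Γ.minDisplacementSet (α ^ m) = Set.range ℓ := by
  obtain ⟨ℓ, d, hℓ, hd, hαℓ⟩ := hΓ.exists_isLine_translate hact hnoinv hα
  exact ⟨ℓ, hℓ, hℓ.injective hΓ,
    fun _ hm => hℓ.minDisplacementSet_zpow_eq_range hΓ hact hd hαℓ hm⟩

end Action

end SimpleGraph

section Commensurability

variable {G : Type*} [Group G]

def SharePower (x y : G) : Prop :=
  ∃ m n : ℤ, m ≠ 0 ∧ n ≠ 0 ∧ x ^ m = y ^ n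

theorem SharePower.trans {x y z : G} : SharePower x y → SharePower y z → SharePower x z
  | ⟨m₁, n₁, hm₁, hn₁, h₁⟩, ⟨m₂, n₂, hm₂, hn₂, h₂⟩ =>
    ⟨m₁ * m₂, n₂ * n₁, mul_ne_zero hm₁ hm₂, mul_ne_zero hn₂ hn₁, by
      rw [zpow_mul, h₁, ← zpow_mul, mul_comm, zpow_mul, h₂, ← zpow_mul]⟩

theorem Subgroup.sharePower_of_isCyclic {H : Subgroup G} [IsCyclic H] {x y : G} (hx : x ∈ H)
    (hy : y ∈ H) (hx1 : x ≠ 1) (hy1 : y ≠ 1) : SharePower x y := by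
  obtain ⟨z, hz⟩ := IsCyclic.exists_generator (α := H)
  obtain ⟨p, hp⟩ := Subgroup.mem_zpowers_iff.mp (hz ⟨x, hx⟩)
  obtain ⟨q, hq⟩ := Subgroup.mem_zpowers_iff.mp (hz ⟨y, hy⟩)
  replace hp : (z : G) ^ p = x := congrArg Subtype.val hp
  replace hq : (z : G) ^ q = y := congrArg Subtype.val hq
  refine ⟨q, p, ?_, ?_, ?_⟩
  · rintro rfl
    exact hy1 (by simp [← hq])
  · rintro rfl
    exact hx1 (by simp [← hp])
  · rw [← hp, ← hq, ← zpow_mul, ← zpow_mul, mul_comm]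

theorem sharePower_of_mem_stabilizer {V : Type*} [MulAction G V] {T : SimpleGraph V}
    (hT : T.Preconnected) (hv : ∀ v : V, IsCyclic (MulAction.stabilizer G v))
    (he : ∀ u v : V, T.Adj u v →
      Nontrivial ↥(MulAction.stabilizer G u ⊓ MulAction.stabilizer G v))
    {u w : V} {x y : G} (hx : x ∈ MulAction.stabilizer G u) (hy : y ∈ MulAction.stabilizer G w)
    (hx1 : x ≠ 1) (hy1 : y ≠ 1) : SharePower x y := by
  obtain ⟨q⟩ := hT u w
  induction q generalizing x with
  | nil =>
    have := hv u
    exact Subgroup.sharePower_of_isCyclic hx hy hx1 hy1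
  | @cons u b w hadj q ih =>
    have := hv u
    have := he u b hadj
    obtain ⟨⟨t, htu, htb⟩, ht1⟩ :=
      exists_ne (1 : ↥(MulAction.stabilizer G u ⊓ MulAction.stabilizer G b))
    have ht1 : t ≠ 1 := fun h => ht1 (Subtype.ext h)
    exact (Subgroup.sharePower_of_isCyclic hx htu hx1 ht1).trans (ih htb hy ht1)

end Commensurability

theorem stmt9_general {V V' : Type} (T : SimpleGraph V) (T' : SimpleGraph V')
    (hT : T.IsTree) (hT' : T'.IsTree)
    (G G' : Type) [Group G] [Group G'] [MulAction G V] [MulAction G' V']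
    -- the actions are by graph automorphisms
    (hact' : ∀ (g : G') (u v : V'), T'.Adj u v → T'.Adj (g • u) (g • v))
    -- the action of `G'` on `T'` is without inversions
    (hnoinv : ∀ (g : G') (u v : V'), T'.Adj u v → ¬(g • u = v ∧ g • v = u))
    -- vertex stabilizers of the `G`-action are infinite cyclic
    (hvstab : ∀ v : V, IsCyclic ↥(MulAction.stabilizer G v) ∧
      Infinite ↥(MulAction.stabilizer G v))
    -- edge stabilizers of the `G`-action are infinite cyclic
    (hestab : ∀ u v : V, T.Adj u v →
      IsCyclic ↥(MulAction.stabilizer G u ⊓ MulAction.stabilizer G v) ∧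
        Infinite ↥(MulAction.stabilizer G u ⊓ MulAction.stabilizer G v))
    (f : G →* G') (a : G)
    -- `a` is elliptic in `T`
    (ha : ∃ v : V, a • v = v)
    -- `f a` is hyperbolic in `T'`
    (hhyp : ∀ v : V', f a • v ≠ v) :
    -- the image `f(G)` stabilizes a line in `T'`, invariant under every `f g`
    ∃ ℓ : ℤ → V', Function.Injective ℓ ∧ (∀ i : ℤ, T'.Adj (ℓ i) (ℓ (i + 1))) ∧
      (∀ g : G, (fun x : V' => f g • x) '' Set.range ℓ = Set.range ℓ) := by
  obtain ⟨ℓ, hℓ, hinj, haxis⟩ := hT'.exists_axis hact' hnoinv hhyp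
  refine ⟨ℓ, hinj, hℓ.adj, fun g => ?_⟩
  obtain ⟨v, hv⟩ := ha
  have ha1 : a ≠ 1 := by
    rintro rfl
    exact hhyp (ℓ 0) (by simp)
  obtain ⟨m, n, hm, hn, hmn⟩ : SharePower a (g * a * g⁻¹) :=
    sharePower_of_mem_stabilizer hT.connected.preconnected (fun v => (hvstab v).1)
      (fun u v h => have := (hestab u v h).2; inferInstance) (u := v) (w := g • v) hv
      (by simp [MulAction.mem_stabilizer_iff, mul_smul, hv]) ha1 (by simpa using ha1)
  have hconj : f a ^ m = f g * f a ^ n * (f g)⁻¹ := by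
    simpa [conj_zpow] using congrArg f hmn
  calc (fun x => f g • x) '' Set.range ℓ = f g • T'.minDisplacementSet (f a ^ n) := by
        rw [Set.image_smul, haxis n hn]
    _ = T'.minDisplacementSet (f a ^ m) := by
        rw [hconj, hT'.connected.minDisplacementSet_conj hact']
    _ = Set.range ℓ := haxis m hm

theorem stmt9 {V V' : Type} (T : SimpleGraph V) (T' : SimpleGraph V')
    (hT : T.IsTree) (hT' : T'.IsTree)
    (G G' : Type) [Group G] [Group G'] [MulAction G V] [MulAction G' V']
    -- the actions are by graph automorphisms
    (hact : ∀ (g : G) (u v : V), T.Adj u v → T.Adj (g • u) (g • v))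
    (hact' : ∀ (g : G') (u v : V'), T'.Adj u v → T'.Adj (g • u) (g • v))
    -- the action of `G'` on `T'` is without inversions
    (hnoinv : ∀ (g : G') (u v : V'), T'.Adj u v → ¬(g • u = v ∧ g • v = u))
    -- vertex stabilizers of the `G`-action are infinite cyclic
    (hvstab : ∀ v : V, IsCyclic ↥(MulAction.stabilizer G v) ∧
      Infinite ↥(MulAction.stabilizer G v))
    -- edge stabilizers of the `G`-action are infinite cyclic
    (hestab : ∀ u v : V, T.Adj u v →
      IsCyclic ↥(MulAction.stabilizer G u ⊓ MulAction.stabilizer G v) ∧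
        Infinite ↥(MulAction.stabilizer G u ⊓ MulAction.stabilizer G v))
    -- stabilizers of the `G'`-action are cyclic
    (hvstab' : ∀ v : V', IsCyclic ↥(MulAction.stabilizer G' v))
    (f : G →* G') (a : G)
    -- `a` is elliptic in `T`
    (ha : ∃ v : V, a • v = v)
    -- `f a` is hyperbolic in `T'`
    (hhyp : ∀ v : V', f a • v ≠ v) :
    -- the image `f(G)` stabilizes a line in `T'`, invariant under every `f g`
    ∃ ℓ : ℤ → V', Function.Injective ℓ ∧ (∀ i : ℤ, T'.Adj (ℓ i) (ℓ (i + 1))) ∧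
      (∀ g : G, (fun x : V' => f g • x) '' Set.range ℓ = Set.range ℓ) :=
  stmt9_general T T' hT hT' G G' hact' hnoinv hvstab hestab f a ha hhyp
end

section
/- Let m = p m' and n be integers with p prime, p not dividing n, |n| > 1, and |m'| > 1. Then BS(m,n) is not Hopfian: there exists a surjective but non-injective group endomorphism of BS(m,n) = ⟨a,t | t a^{pm'} t⁻¹ = a^n⟩. -/
/-!
The endomorphism `f : a ↦ a ^ p, t ↦ t` of `BS(p k, n)` is well defined because
`t (a ^ p) ^ (p k) t⁻¹ = (t a ^ (p k) t⁻¹) ^ p = (a ^ p) ^ n`. It is onto: its image contains `t`,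
`a ^ p` and `f (t a ^ k t⁻¹) = a ^ n`, hence `a`, as `p` and `n` are coprime. It is not injective:
it kills `⁅t a ^ k t⁻¹, a⁆`, which goes to the commutator of the powers `a ^ n` and `a ^ p`.
That commutator is nontrivial, as one sees by Britton's lemma after mapping `BS(p k, n)` to the
HNN extension of `ℤ = ⟨g⟩` along `⟨g ^ (p k)⟩ ≅ ⟨g ^ n⟩`: there `g ^ k ∉ ⟨g ^ (p k)⟩` and
`g ∉ ⟨g ^ n⟩`, so `t g ^ k t⁻¹ g t g ^ (-k) t⁻¹ g⁻¹` is a reduced word.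
-/

open Subgroup
open scoped commutatorElement

section ZPowers

variable {G H : Type*} [Group G] [Group H]

theorem injective_zpowersHom {x : G} (hx : ¬IsOfFinOrder x) :
    Function.Injective (zpowersHom G x) := fun _ _ h =>
  Multiplicative.toAdd.injective (injective_zpow_iff_not_isOfFinOrder.2 hx h)

noncomputable def zpowersMulEquivOfNotIsOfFinOrder {x : G} (hx : ¬IsOfFinOrder x) :
    Multiplicative ℤ ≃* zpowers x :=
  (MonoidHom.ofInjective (injective_zpowersHom hx)).trans (.subgroupCongr (range_zpowersHom x))

theorem zpowersMulEquivOfNotIsOfFinOrder_ofAdd_one {x : G} (hx : ¬IsOfFinOrder x) :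
    zpowersMulEquivOfNotIsOfFinOrder hx (.ofAdd 1) = ⟨x, mem_zpowers x⟩ :=
  Subtype.ext (zpow_one x)

noncomputable def zpowersEquivZPowersOfNotIsOfFinOrder {x : G} {y : H} (hx : ¬IsOfFinOrder x)
    (hy : ¬IsOfFinOrder y) : zpowers x ≃* zpowers y :=
  (zpowersMulEquivOfNotIsOfFinOrder hx).symm.trans (zpowersMulEquivOfNotIsOfFinOrder hy)

theorem zpowersEquivZPowersOfNotIsOfFinOrder_apply_self {x : G} {y : H} (hx : ¬IsOfFinOrder x)
    (hy : ¬IsOfFinOrder y) :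
    zpowersEquivZPowersOfNotIsOfFinOrder hx hy ⟨x, mem_zpowers x⟩ = ⟨y, mem_zpowers y⟩ := by
  rw [zpowersEquivZPowersOfNotIsOfFinOrder, MulEquiv.trans_apply,
    ← zpowersMulEquivOfNotIsOfFinOrder_ofAdd_one hx, MulEquiv.symm_apply_apply,
    zpowersMulEquivOfNotIsOfFinOrder_ofAdd_one]

theorem zpow_mem_zpowers_zpow_iff {g : G} (hg : ¬IsOfFinOrder g) {k m : ℤ} :
    g ^ k ∈ zpowers (g ^ m) ↔ m ∣ k := by
  simp only [mem_zpowers_iff, ← zpow_mul, (injective_zpow_iff_not_isOfFinOrder.2 hg).eq_iff,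
    dvd_def, eq_comm]

end ZPowers

namespace HNNExtension

variable {G : Type*} [Group G] {A B : Subgroup G} {φ : A ≃* B}

/-- Britton's lemma: `t g t⁻¹ h t g⁻¹ t⁻¹ h⁻¹` is a reduced word with letters outside the base. -/
theorem commutatorElement_conj_t_ne_one {g h : G} (hg : g ∉ A) (hh : h ∉ B) :
    ⁅(t * of g * t⁻¹ : HNNExtension G A B φ), of (φ := φ) h⁆ ≠ 1 := by
  intro hcomm
  have hg' : g⁻¹ ∉ A := fun h' => hg (by simpa using A.inv_mem h')
  let w : NormalWord.ReducedWord G A B :=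
    { head := 1
      toList := [(1, g), (-1, h), (1, g⁻¹), (-1, h⁻¹)]
      chain := by
        simp only [List.isChain_cons_cons, List.isChain_singleton, toSubgroup_one,
          toSubgroup_neg_one]
        exact ⟨fun h' => absurd h' hg, fun h' => absurd h' hh, fun h' => absurd h' hg', trivial⟩ }
  have hw : w.prod φ = ⁅(t * of g * t⁻¹ : HNNExtension G A B φ), of (φ := φ) h⁆ := by
    simp [w, NormalWord.ReducedWord.prod, commutatorElement_def, mul_assoc]
  have := ReducedWord.toList_eq_nil_of_mem_of_range φ w (hw ▸ hcomm ▸ one_mem _)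
  simp [w] at this

end HNNExtension

theorem not_isOfFinOrder_ofAdd_one_zpow {m : ℤ} (hm : m ≠ 0) :
    ¬IsOfFinOrder (Multiplicative.ofAdd (1 : ℤ) ^ m) :=
  not_isOfFinOrder_of_isMulTorsionFree (by simpa using hm)

namespace BS

variable {m n : ℤ}

theorem t_mul_a_zpow_mul_t_inv (m n : ℤ) : t m n * a m n ^ m * (t m n)⁻¹ = a m n ^ n := by
  have h := PresentedGroup.one_of_mem (rels := bsRels m n) rfl
  simp only [map_mul, map_inv, map_zpow] at h
  exact mul_inv_eq_one.1 h

def lift {G : Type*} [Group G] (x y : G) (h : y * x ^ m * y⁻¹ = x ^ n) : BS m n →* G :=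
  PresentedGroup.toGroup (f := fun b => if b then y else x) <| by
    rintro r rfl
    simp [h]

@[simp]
theorem lift_a {G : Type*} [Group G] {x y : G} (h : y * x ^ m * y⁻¹ = x ^ n) :
    lift x y h (a m n) = x :=
  PresentedGroup.toGroup.of _

@[simp]
theorem lift_t {G : Type*} [Group G] {x y : G} (h : y * x ^ m * y⁻¹ = x ^ n) :
    lift x y h (t m n) = y :=
  PresentedGroup.toGroup.of _

theorem range_eq_top_of_mem {G : Type*} [Group G] {f : G →* BS m n} (ha : a m n ∈ f.range)
    (ht : t m n ∈ f.range) : f.range = ⊤ := by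
  rw [eq_top_iff, ← PresentedGroup.closure_range_of, closure_le]
  rintro _ ⟨_ | _, rfl⟩
  exacts [ha, ht]

noncomputable def stableEquiv (hm : m ≠ 0) (hn : n ≠ 0) :
    zpowers (Multiplicative.ofAdd (1 : ℤ) ^ m) ≃* zpowers (Multiplicative.ofAdd (1 : ℤ) ^ n) :=
  zpowersEquivZPowersOfNotIsOfFinOrder (not_isOfFinOrder_ofAdd_one_zpow hm)
    (not_isOfFinOrder_ofAdd_one_zpow hn)

theorem stableEquiv_apply_self (hm : m ≠ 0) (hn : n ≠ 0) :
    stableEquiv hm hn ⟨_, mem_zpowers _⟩ = ⟨_, mem_zpowers _⟩ :=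
  zpowersEquivZPowersOfNotIsOfFinOrder_apply_self _ _

noncomputable def toHNNExtension (hm : m ≠ 0) (hn : n ≠ 0) :
    BS m n →* HNNExtension _ _ _ (stableEquiv hm hn) :=
  lift (HNNExtension.of (.ofAdd 1)) HNNExtension.t <| by
    have h := HNNExtension.equiv_eq_conj (φ := stableEquiv hm hn) ⟨_, mem_zpowers _⟩
    rw [stableEquiv_apply_self] at h
    simpa only [map_zpow] using h.symm

theorem commutatorElement_ne_one (hm : m ≠ 0) (hn : n ≠ 0) {k l : ℤ} (hk : ¬m ∣ k)
    (hl : ¬n ∣ l) : ⁅t m n * a m n ^ k * (t m n)⁻¹, a m n ^ l⁆ ≠ 1 := by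
  have hg : ¬IsOfFinOrder (Multiplicative.ofAdd (1 : ℤ)) :=
    not_isOfFinOrder_of_isMulTorsionFree (by simp)
  intro h
  refine HNNExtension.commutatorElement_conj_t_ne_one (φ := stableEquiv hm hn)
    (g := .ofAdd 1 ^ k) (h := .ofAdd 1 ^ l) (by rwa [zpow_mem_zpowers_zpow_iff hg])
    (by rwa [zpow_mem_zpowers_zpow_iff hg]) ?_
  simpa [toHNNExtension, map_commutatorElement] using congrArg (toHNNExtension hm hn) h

def powEndo (p k n : ℤ) : BS (p * k) n →* BS (p * k) n :=
  lift (a _ n ^ p) (t _ n) <| by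
    rw [← zpow_mul, show p * (p * k) = p * k * p by ring, zpow_mul, ← conj_zpow,
      t_mul_a_zpow_mul_t_inv, ← zpow_mul, ← zpow_mul, mul_comm n p]

theorem powEndo_conj_t (p k n : ℤ) :
    powEndo p k n (t (p * k) n * a (p * k) n ^ k * (t (p * k) n)⁻¹) = a (p * k) n ^ n := by
  simp [powEndo, ← zpow_mul, t_mul_a_zpow_mul_t_inv]

theorem powEndo_surjective {p n : ℤ} (k : ℤ) (hpn : IsCoprime p n) :
    Function.Surjective (powEndo p k n) := by
  obtain ⟨x, y, hxy⟩ := hpn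
  have hap : a _ n ^ p ∈ (powEndo p k n).range := ⟨a _ n, by simp [powEndo]⟩
  have han : a _ n ^ n ∈ (powEndo p k n).range := ⟨_, powEndo_conj_t p k n⟩
  rw [← MonoidHom.range_eq_top]
  refine range_eq_top_of_mem ?_ ⟨t _ n, by simp [powEndo]⟩
  have : a (p * k) n = (a _ n ^ p) ^ x * (a _ n ^ n) ^ y := by
    rw [← zpow_mul, ← zpow_mul, ← zpow_add, mul_comm p x, mul_comm n y, hxy, zpow_one]
  exact this ▸ mul_mem (zpow_mem hap x) (zpow_mem han y)

theorem powEndo_commutatorElement (p k n : ℤ) :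
    powEndo p k n ⁅t (p * k) n * a (p * k) n ^ k * (t (p * k) n)⁻¹, a (p * k) n⁆ = 1 := by
  rw [map_commutatorElement, powEndo_conj_t, commutatorElement_eq_one_iff_commute]
  simp only [powEndo, lift_a]
  exact Commute.zpow_zpow_self _ _ _

theorem not_injective_powEndo {p k n : ℤ} (hp : p ≠ 0) (hp1 : ¬IsUnit p) (hk : k ≠ 0)
    (hn : n ≠ 0) (hn1 : ¬IsUnit n) : ¬Function.Injective (powEndo p k n) := by
  have hpk : ¬p * k ∣ k := fun h =>
    hp1 (isUnit_of_dvd_one ((mul_dvd_mul_iff_right hk).1 (by simpa using h)))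
  intro hinj
  refine commutatorElement_ne_one (mul_ne_zero hp hk) hn hpk (l := 1)
    (fun h => hn1 (isUnit_of_dvd_one h)) ?_
  rw [zpow_one]
  exact hinj (by rw [powEndo_commutatorElement, map_one])

end BS

theorem stmt11 (p m' n : ℤ) (hp : Prime p) (hpn : ¬p ∣ n) (hn : 1 < |n|) (hm' : 1 < |m'|) :
    ∃ f : BS (p * m') n →* BS (p * m') n,
      Function.Surjective f ∧ ¬Function.Injective f := by
  have hm'0 : m' ≠ 0 := by rintro rfl; simp at hm'
  have hn0 : n ≠ 0 := by rintro rfl; simp at hn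
  have hn1 : ¬IsUnit n := fun h => hn.ne' (Int.isUnit_iff_abs_eq.1 h)
  exact ⟨BS.powEndo p m' n, BS.powEndo_surjective m' ((Prime.coprime_iff_not_dvd hp).2 hpn),
    BS.not_injective_powEndo hp.ne_zero hp.not_isUnit hm'0 hn0 hn1⟩
end
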